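/- arXiv:2411.09100 — 10 statements merged into one kernel-verified Lean document; each statement's English description precedes it below -/
import Mathlib

section
/- Let F(z) = 1 - exp(-z) be the cumulative distribution function of the Exponential(1) distribution. Let I be a finite index set, p : I → ℝ with 0 ≤ p(i) < 1 for all i ∈ I, and set b(i) = -log(1 - p(i)). Then for any two disjoint finite subsets S, T ⊆ I, F(∑_{i ∈ S ∪ T} b(i)) - F(∑_{i ∈ S} b(i)) = (1 - F(∑_{i ∈ S} b(i))) · (1 - ∏_{i ∈ T} (1 - p(i))). -/
/-- The Independent Cascade model is the GLT model with Exponential(1) thresholds: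
with `F z = 1 - exp(-z)` and `b i = -log (1 - p i)`, for disjoint finite sets `S`, `T`,
the GLT increment `F (∑_{S ∪ T} b) - F (∑_S b)` equals
`(1 - F (∑_S b)) * (1 - ∏_T (1 - p i))`. -/
theorem ic_is_glt_identity {I : Type*} [DecidableEq I]
    (p : I → ℝ) (hp : ∀ i, 0 ≤ p i ∧ p i < 1)
    (b : I → ℝ) (hb : ∀ i, b i = -Real.log (1 - p i))
    (F : ℝ → ℝ) (hF : ∀ z, F z = 1 - Real.exp (-z))
    (S T : Finset I) (hST : Disjoint S T) :
    F (∑ i ∈ S ∪ T, b i) - F (∑ i ∈ S, b i) =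
      (1 - F (∑ i ∈ S, b i)) * (1 - ∏ i ∈ T, (1 - p i)) := by
  have hT : Real.exp (-(∑ i ∈ T, b i)) = ∏ i ∈ T, (1 - p i) := by
    rw [← Finset.sum_neg_distrib, Real.exp_sum]
    refine Finset.prod_congr rfl fun i _ => ?_
    rw [hb, neg_neg, Real.exp_log (by linarith [(hp i).2])]
  rw [hF, hF, Finset.sum_union hST, neg_add, Real.exp_add, hT]
  ring
end

section
/- Let V be a nonempty finite set and p : V → ℕ. Let d = (∑_{v ∈ V} p(v)) / |V| (a real number), and let r be a real number with 0 ≤ r ≤ 2^d - d - 1 (real exponentiation). Then ∑_{v ∈ V} p(v) + r·|V| ≤ ∑_{v ∈ V} (2^{p(v)} - 1). -/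
/-- `x ↦ 2^x` is convex on ℝ. -/
lemma convexOn_two_rpow : ConvexOn ℝ Set.univ (fun x : ℝ => (2 : ℝ) ^ x) := by
  have h : (fun x : ℝ => (2 : ℝ) ^ x) = fun x : ℝ => Real.exp (Real.log 2 * x) := by
    funext x
    rw [Real.rpow_def_of_pos (by norm_num : (0:ℝ) < 2)]
  rw [h]
  have := convexOn_exp.comp_affineMap
    (LinearMap.toAffineMap (Real.log 2 • (LinearMap.id : ℝ →ₗ[ℝ] ℝ)))
  simpa [Function.comp_def, smul_eq_mul] using this

/-- For a graph with node set `V` and in-degrees `p v`, with `d` the average in-degree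
and `0 ≤ r ≤ 2^d - d - 1`, the GLT parameter count `|E| + r |V|` is at most the
Triggering model parameter count `∑_v (2^{p v} - 1)`. -/
theorem glt_fewer_params_than_triggering {V : Type*} [Fintype V] [Nonempty V]
    (p : V → ℕ) (d r : ℝ)
    (hd : d = (∑ v, (p v : ℝ)) / (Fintype.card V : ℝ))
    (hr0 : 0 ≤ r) (hr : r ≤ (2 : ℝ) ^ d - d - 1) :
    (∑ v, (p v : ℝ)) + r * (Fintype.card V : ℝ) ≤ ∑ v, ((2 : ℝ) ^ (p v) - 1) := by
  set n : ℝ := (Fintype.card V : ℝ) with hn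
  have hnpos : (0:ℝ) < n := by
    exact Nat.cast_pos.mpr (Fintype.card_pos (α := V))
  -- Jensen
  have jensen : (2:ℝ) ^ d ≤ (∑ v, (2:ℝ) ^ (p v : ℝ)) / n := by
    have hw : ∑ _v : V, (1 / n) = 1 := by
      rw [Finset.sum_const, Finset.card_univ, nsmul_eq_mul, ← hn]; exact mul_one_div_cancel hnpos.ne'
    have := convexOn_two_rpow.map_sum_le (t := Finset.univ) (w := fun _ : V => 1/n)
      (p := fun v => (p v : ℝ)) (fun _ _ => by positivity) hw (fun _ _ => trivial)
    have hsum : ∑ v : V, (1/n) • ((p v : ℝ)) = d := by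
      rw [hd, Finset.sum_div]
      simp [smul_eq_mul, div_eq_mul_inv, mul_comm]
    rw [hsum] at this
    calc (2:ℝ) ^ d ≤ ∑ v : V, (1/n) * (2:ℝ) ^ (p v : ℝ) := this
      _ = (∑ v, (2:ℝ) ^ (p v : ℝ)) / n := by
          rw [Finset.sum_div]
          simp [div_eq_mul_inv, mul_comm]
  have hpow : ∀ v : V, (2:ℝ) ^ ((p v : ℝ)) = (2:ℝ) ^ (p v) := fun v =>
    Real.rpow_natCast 2 (p v)
  have key : n * (2:ℝ) ^ d ≤ ∑ v, (2:ℝ) ^ (p v) := by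
    calc n * (2:ℝ) ^ d ≤ n * ((∑ v, (2:ℝ) ^ (p v : ℝ)) / n) := by
          exact mul_le_mul_of_nonneg_left jensen hnpos.le
      _ = ∑ v, (2:ℝ) ^ (p v : ℝ) := by field_simp
      _ = ∑ v, (2:ℝ) ^ (p v) := by simp [hpow]
  have hnd : n * d = ∑ v, (p v : ℝ) := by
    rw [hd]; field_simp
  have hRHS : ∑ v, ((2 : ℝ) ^ (p v) - 1) = (∑ v, (2:ℝ) ^ (p v)) - n := by
    rw [Finset.sum_sub_distrib]
    simp [hn]
  rw [hRHS]
  have : r * n ≤ ((2:ℝ)^d - d - 1) * n := mul_le_mul_of_nonneg_right hr hnpos.le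
  nlinarith [key, hnd]
end

section
/- Let f : ℝ → ℝ be a nonnegative integrable function that is log-concave, i.e., f(λx + (1-λ)y) ≥ f(x)^λ · f(y)^{1-λ} for all x, y ∈ ℝ and λ ∈ [0, 1]. Define F(x) = ∫_{-∞}^{x} f(t) dt. Then the increment function (x, y) ↦ F(x) - F(y) is log-concave on the convex set {(x, y) : y < x}: for all y₁ < x₁, y₂ < x₂ and λ ∈ [0, 1], F(λx₁ + (1-λ)x₂) - F(λy₁ + (1-λ)y₂) ≥ (F(x₁) - F(y₁))^λ · (F(x₂) - F(y₂))^{1-λ}. -/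
open MeasureTheory Set Filter
open scoped ENNReal NNReal

/-- Convex hull fact: a "midpoint-closed" bounded nonempty set contains the open
interval between its inf and sup. -/
lemma hull_Ioo {s : Set ℝ} (hne : s.Nonempty)
    (hconv : ∀ a ∈ s, ∀ b ∈ s, ∀ μ ∈ Set.Icc (0:ℝ) 1, μ*a+(1-μ)*b ∈ s) :
    Set.Ioo (sInf s) (sSup s) ⊆ s := by
  intro x hx
  obtain ⟨a, ha, hax⟩ := exists_lt_of_csInf_lt hne hx.1
  obtain ⟨b, hb, hxb⟩ := exists_lt_of_lt_csSup hne hx.2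
  have hab : a < b := hax.trans hxb
  have hba : 0 < b - a := by linarith
  set μ : ℝ := (b - x)/(b - a) with hμ
  have hμ0 : 0 ≤ μ := div_nonneg (by linarith) (by linarith)
  have hμ1 : μ ≤ 1 := by rw [div_le_one hba]; linarith
  have hxval : μ*a+(1-μ)*b = x := by
    rw [hμ, div_mul_eq_mul_div, one_sub_div hba.ne', div_mul_eq_mul_div, ← add_div,
      div_eq_iff hba.ne']; ring
  have := hconv a ha b hb μ ⟨hμ0, hμ1⟩
  rwa [hxval] at this

lemma sSup_comb {A B C : Set ℝ} {l : ℝ} (hA : A.Nonempty) (hB : B.Nonempty)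
    (hCb : BddAbove C) (h : ∀ a ∈ A, ∀ b ∈ B, l*a+(1-l)*b ∈ C)
    (hl : 0 < l) (hl1 : l < 1) :
    l * sSup A + (1-l) * sSup B ≤ sSup C := by
  have h1l : (0:ℝ) < 1 - l := by linarith
  have hA' : sSup A ≤ (sSup C - (1-l)*sSup B)/l := by
    apply csSup_le hA
    intro a ha
    rw [le_div_iff₀ hl]
    have hB' : sSup B ≤ (sSup C - l*a)/(1-l) := by
      apply csSup_le hB
      intro b hb
      rw [le_div_iff₀ h1l]
      have := le_csSup hCb (h a ha b hb)
      linarith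
    rw [le_div_iff₀ h1l] at hB'
    linarith
  rw [le_div_iff₀ hl] at hA'
  linarith

lemma sInf_comb {A B C : Set ℝ} {l : ℝ} (hA : A.Nonempty) (hB : B.Nonempty)
    (hCb : BddBelow C) (h : ∀ a ∈ A, ∀ b ∈ B, l*a+(1-l)*b ∈ C)
    (hl : 0 < l) (hl1 : l < 1) :
    sInf C ≤ l * sInf A + (1-l) * sInf B := by
  have h1l : (0:ℝ) < 1 - l := by linarith
  have hA' : (sInf C - (1-l)*sInf B)/l ≤ sInf A := by
    apply le_csInf hA
    intro a ha
    rw [div_le_iff₀ hl]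
    have hB' : (sInf C - l*a)/(1-l) ≤ sInf B := by
      apply le_csInf hB
      intro b hb
      rw [div_le_iff₀ h1l]
      have := csInf_le hCb (h a ha b hb)
      linarith
    rw [div_le_iff₀ h1l] at hB'
    linarith
  rw [div_le_iff₀ hl] at hA'
  linarith

/-- 1D Brunn–Minkowski-type bound for combinations of bounded sets. -/
lemma vol_comb {A B C : Set ℝ} {l : ℝ} (hA : A.Nonempty) (hB : B.Nonempty)
    (hAa : BddAbove A) (hAb : BddBelow A) (hBa : BddAbove B) (hBb : BddBelow B)
    (hCa : BddAbove C) (hCb : BddBelow C)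
    (hconvC : ∀ a ∈ C, ∀ b ∈ C, ∀ μ ∈ Set.Icc (0:ℝ) 1, μ*a+(1-μ)*b ∈ C)
    (h : ∀ a ∈ A, ∀ b ∈ B, l*a+(1-l)*b ∈ C)
    (hl : 0 < l) (hl1 : l < 1) :
    ENNReal.ofReal l * volume A + ENNReal.ofReal (1-l) * volume B ≤ volume C := by
  obtain ⟨a₀, ha₀⟩ := id hA
  obtain ⟨b₀, hb₀⟩ := id hB
  have hAsub : A ⊆ Icc (sInf A) (sSup A) := fun x hx => ⟨csInf_le hAb hx, le_csSup hAa hx⟩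
  have hBsub : B ⊆ Icc (sInf B) (sSup B) := fun x hx => ⟨csInf_le hBb hx, le_csSup hBa hx⟩
  have hvolA : volume A ≤ ENNReal.ofReal (sSup A - sInf A) := by
    calc volume A ≤ volume (Icc (sInf A) (sSup A)) := measure_mono hAsub
    _ = ENNReal.ofReal (sSup A - sInf A) := Real.volume_Icc
  have hvolB : volume B ≤ ENNReal.ofReal (sSup B - sInf B) := by
    calc volume B ≤ volume (Icc (sInf B) (sSup B)) := measure_mono hBsub
    _ = ENNReal.ofReal (sSup B - sInf B) := Real.volume_Icc
  have hCne : C.Nonempty := ⟨_, h a₀ ha₀ b₀ hb₀⟩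
  have hvolC : ENNReal.ofReal (sSup C - sInf C) ≤ volume C := by
    calc ENNReal.ofReal (sSup C - sInf C) = volume (Ioo (sInf C) (sSup C)) := Real.volume_Ioo.symm
    _ ≤ volume C := measure_mono (hull_Ioo hCne hconvC)
  have hsup := sSup_comb hA hB hCa h hl hl1
  have hinf := sInf_comb hA hB hCb h hl hl1
  have hAne : sInf A ≤ sSup A := csInf_le_csSup hA hAb hAa
  have hBne : sInf B ≤ sSup B := csInf_le_csSup hB hBb hBa
  calc ENNReal.ofReal l * volume A + ENNReal.ofReal (1-l) * volume B
      ≤ ENNReal.ofReal l * ENNReal.ofReal (sSup A - sInf A)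
        + ENNReal.ofReal (1-l) * ENNReal.ofReal (sSup B - sInf B) := by
        gcongr
    _ = ENNReal.ofReal (l * (sSup A - sInf A) + (1-l) * (sSup B - sInf B)) := by
        rw [ENNReal.ofReal_add (mul_nonneg hl.le (by linarith)) (mul_nonneg (by linarith) (by linarith)),
          ENNReal.ofReal_mul hl.le, ENNReal.ofReal_mul (by linarith)]
    _ ≤ ENNReal.ofReal (sSup C - sInf C) := by
        apply ENNReal.ofReal_le_ofReal; linarith
    _ ≤ volume C := hvolC

/-- Scaling a lintegral over `Ioi 0`. -/
lemma lint_scale (φ : ℝ → ℝ≥0∞) (hφ : Measurable φ) {c : ℝ} (hc : 0 < c) :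
    ∫⁻ t in Set.Ioi (0:ℝ), φ (c * t) = ENNReal.ofReal c⁻¹ * ∫⁻ u in Set.Ioi (0:ℝ), φ u := by
  have hmeas : Measurable fun t : ℝ => c * t := (measurable_const.mul measurable_id)
  have hpre : (fun t : ℝ => c * t) ⁻¹' (Set.Ioi 0) = Set.Ioi 0 := by
    ext x; simp [Set.mem_Ioi, mul_pos_iff_of_pos_left hc]
  calc ∫⁻ t in Set.Ioi (0:ℝ), φ (c * t)
      = ∫⁻ u, φ u ∂(Measure.map (fun t => c * t) (volume.restrict (Set.Ioi 0))) := by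
        rw [lintegral_map hφ hmeas]
    _ = ∫⁻ u, φ u ∂((Measure.map (fun t => c * t) volume).restrict (Set.Ioi 0)) := by
        rw [Measure.restrict_map hmeas measurableSet_Ioi, hpre]
    _ = ENNReal.ofReal c⁻¹ * ∫⁻ u in Set.Ioi (0:ℝ), φ u := by
        rw [Real.map_volume_mul_left hc.ne', abs_of_pos (inv_pos.mpr hc),
          Measure.restrict_smul, lintegral_smul_measure, smul_eq_mul]

lemma rpow_split {a b u v l : ℝ} (ha : 0 ≤ a) (hb : 0 ≤ b) (hu : 0 ≤ u) (hv : 0 ≤ v) :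
    (a*u)^l * (b*v)^(1-l) = a^l*b^(1-l)*(u^l*v^(1-l)) := by
  rw [Real.mul_rpow ha hu, Real.mul_rpow hb hv]; ring

lemma rpow_self_comb {N : ℝ} (hN : 0 < N) (l : ℝ) : N ^ l * N ^ (1-l) = N := by
  rw [← Real.rpow_add hN]; norm_num

set_option maxHeartbeats 1000000 in
/-- The core 1D Prékopa–Leindler-type inequality for a bounded nonnegative
log-concave function. -/
lemma core {g : ℝ → ℝ} (hg0 : ∀ x, 0 ≤ g x) (hgm : AEMeasurable g volume)
    {M : ℝ} (hbd : ∀ x, g x ≤ M)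
    (hglc : ∀ x y : ℝ, ∀ l ∈ Set.Icc (0:ℝ) 1, g x ^ l * g y ^ (1-l) ≤ g (l*x+(1-l)*y))
    {x₁ y₁ x₂ y₂ l : ℝ} (h1 : y₁ < x₁) (h2 : y₂ < x₂) (hl : 0 < l) (hl1 : l < 1) :
    (∫ t in Set.Ioc y₁ x₁, g t) ^ l * (∫ t in Set.Ioc y₂ x₂, g t) ^ (1-l)
      ≤ ∫ t in Set.Ioc (l*y₁+(1-l)*y₂) (l*x₁+(1-l)*x₂), g t := by
  have h1l : (0:ℝ) < 1 - l := by linarith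
  set S₁ := Set.Ioc y₁ x₁ with hS₁
  set S₂ := Set.Ioc y₂ x₂ with hS₂
  set S₃ := Set.Ioc (l*y₁+(1-l)*y₂) (l*x₁+(1-l)*x₂) with hS₃
  have hgsm : AEStronglyMeasurable g volume := aestronglyMeasurable_iff_aemeasurable.mpr hgm
  have hint : ∀ u v : ℝ, IntegrableOn g (Set.Ioc u v) := by
    intro u v
    refine Measure.integrableOn_of_bounded (M := M) (by simp [Real.volume_Ioc]) hgsm ?_
    filter_upwards with a
    rw [Real.norm_eq_abs, abs_of_nonneg (hg0 a)]; exact hbd a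
  set I := ∫ t in S₁, g t with hI
  set J := ∫ t in S₂, g t with hJdef
  set K := ∫ t in S₃, g t with hK
  have hI0 : 0 ≤ I := setIntegral_nonneg measurableSet_Ioc fun x _ => hg0 x
  have hJ0 : 0 ≤ J := setIntegral_nonneg measurableSet_Ioc fun x _ => hg0 x
  have hK0 : 0 ≤ K := setIntegral_nonneg measurableSet_Ioc fun x _ => hg0 x
  rcases eq_or_lt_of_le hI0 with hIz | hIpos
  · rw [← hIz, Real.zero_rpow hl.ne', zero_mul]; exact hK0
  rcases eq_or_lt_of_le hJ0 with hJz | hJpos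
  · rw [← hJz, Real.zero_rpow h1l.ne', mul_zero]; exact hK0
  -- suprema
  have hS₁ne : S₁.Nonempty := nonempty_Ioc.mpr h1
  have hS₂ne : S₂.Nonempty := nonempty_Ioc.mpr h2
  have hbddim : ∀ s : Set ℝ, BddAbove (g '' s) := by
    intro s; exact ⟨M, by rintro _ ⟨x, -, rfl⟩; exact hbd x⟩
  set m₁ := sSup (g '' S₁) with hm₁
  set m₂ := sSup (g '' S₂) with hm₂
  have hpos_of_int : ∀ (u v : ℝ), 0 < ∫ t in Set.Ioc u v, g t →
      ∃ p ∈ Set.Ioc u v, 0 < g p := by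
    intro u v hpos
    by_contra hcon
    push_neg at hcon
    have : ∫ t in Set.Ioc u v, g t = 0 := by
      rw [setIntegral_congr_fun measurableSet_Ioc
        (fun x hx => le_antisymm (hcon x hx) (hg0 x) : EqOn g (fun _ => (0:ℝ)) _)]
      simp
    linarith
  obtain ⟨p₁, hp₁S, hp₁⟩ := hpos_of_int _ _ hIpos
  obtain ⟨p₂, hp₂S, hp₂⟩ := hpos_of_int _ _ hJpos
  have hm₁pos : 0 < m₁ := lt_of_lt_of_le hp₁ (le_csSup (hbddim S₁) (mem_image_of_mem g hp₁S))
  have hm₂pos : 0 < m₂ := lt_of_lt_of_le hp₂ (le_csSup (hbddim S₂) (mem_image_of_mem g hp₂S))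
  have hglea : ∀ a ∈ S₁, g a ≤ m₁ := fun a ha => le_csSup (hbddim S₁) (mem_image_of_mem g ha)
  have hgleb : ∀ b ∈ S₂, g b ≤ m₂ := fun b hb => le_csSup (hbddim S₂) (mem_image_of_mem g hb)
  set N := m₁ ^ l * m₂ ^ (1-l) with hN
  have hNpos : 0 < N := mul_pos (Real.rpow_pos_of_pos hm₁pos l) (Real.rpow_pos_of_pos hm₂pos _)
  have hNN : N ^ l * N ^ (1-l) = N := rpow_self_comb hNpos l
  -- level set functions
  set Av : ℝ → ℝ≥0∞ := fun u => volume ({a | u < g a} ∩ S₁) with hAv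
  set Bv : ℝ → ℝ≥0∞ := fun u => volume ({a | u < g a} ∩ S₂) with hBv
  set Cv : ℝ → ℝ≥0∞ := fun u => volume ({a | u < g a} ∩ S₃) with hCv
  have hanti : ∀ (s : Set ℝ), Antitone (fun u => volume ({a | u < g a} ∩ s)) := by
    intro s u v huv
    exact measure_mono (inter_subset_inter_left s (fun a ha => lt_of_le_of_lt huv ha))
  have hAvm : Measurable Av := (hanti S₁).measurable
  have hBvm : Measurable Bv := (hanti S₂).measurable
  have hCvm : Measurable Cv := (hanti S₃).measurable
  -- layer cake
  have hlayer : ∀ (u v : ℝ), ∫⁻ t in Set.Ioi (0:ℝ), volume ({a | t < g a} ∩ Set.Ioc u v)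
      = ENNReal.ofReal (∫ t in Set.Ioc u v, g t) := by
    intro u v
    rw [ofReal_integral_eq_lintegral_ofReal (hint u v) (Eventually.of_forall hg0)]
    rw [lintegral_eq_lintegral_meas_lt (volume.restrict (Set.Ioc u v))
      (Eventually.of_forall hg0) hgm.restrict]
    apply lintegral_congr
    intro t
    rw [Measure.restrict_apply' measurableSet_Ioc]
  -- pointwise level inequality
  have hlevel : ∀ t ∈ Set.Ioi (0:ℝ),
      ENNReal.ofReal l * Av (m₁/N * t) + ENNReal.ofReal (1-l) * Bv (m₂/N * t) ≤ Cv t := by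
    intro t ht
    rw [Set.mem_Ioi] at ht
    rcases lt_or_ge t N with htN | htN
    · -- main case
      have hc₁t : m₁/N * t < m₁ := by
        rw [div_mul_eq_mul_div, div_lt_iff₀ hNpos]
        exact (mul_lt_mul_iff_right₀ hm₁pos).mpr htN
      have hc₂t : m₂/N * t < m₂ := by
        rw [div_mul_eq_mul_div, div_lt_iff₀ hNpos]
        exact (mul_lt_mul_iff_right₀ hm₂pos).mpr htN
      obtain ⟨a', ⟨a₀, ha₀S, rfl⟩, ha'⟩ := exists_lt_of_lt_csSup (hS₁ne.image g) hc₁t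
      obtain ⟨b', ⟨b₀, hb₀S, rfl⟩, hb'⟩ := exists_lt_of_lt_csSup (hS₂ne.image g) hc₂t
      have hAne : ({a | m₁/N * t < g a} ∩ S₁).Nonempty := ⟨a₀, ha', ha₀S⟩
      have hBne : ({a | m₂/N * t < g a} ∩ S₂).Nonempty := ⟨b₀, hb', hb₀S⟩
      have hcomb : ∀ a ∈ {a | m₁/N * t < g a} ∩ S₁, ∀ b ∈ {a | m₂/N * t < g a} ∩ S₂,
          l*a+(1-l)*b ∈ {a | t < g a} ∩ S₃ := by
        rintro a ⟨hag, haS⟩ b ⟨hbg, hbS⟩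
        constructor
        · show t < g (l*a+(1-l)*b)
          have hkey : (m₁/N*t)^l * (m₂/N*t)^(1-l) = t := by
            rw [rpow_split (div_nonneg hm₁pos.le hNpos.le) (div_nonneg hm₂pos.le hNpos.le)
              ht.le ht.le, Real.div_rpow hm₁pos.le hNpos.le, Real.div_rpow hm₂pos.le hNpos.le,
              div_mul_div_comm, hNN, ← hN, div_self hNpos.ne', one_mul,
              ← Real.rpow_add ht]
            norm_num
          have hstrict : (m₁/N*t)^l * (m₂/N*t)^(1-l) < g a ^ l * g b ^ (1-l) := by
            have h1' : (m₁/N*t)^l < g a ^ l :=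
              Real.rpow_lt_rpow (by positivity) hag hl
            have h2' : (m₂/N*t)^(1-l) < g b ^ (1-l) :=
              Real.rpow_lt_rpow (by positivity) hbg h1l
            exact mul_lt_mul'' h1' h2' (Real.rpow_nonneg (by positivity) _)
              (Real.rpow_nonneg (by positivity) _)
          calc t = (m₁/N*t)^l * (m₂/N*t)^(1-l) := hkey.symm
          _ < g a ^ l * g b ^ (1-l) := hstrict
          _ ≤ g (l*a+(1-l)*b) := hglc a b l ⟨hl.le, hl1.le⟩
        · show l*a+(1-l)*b ∈ S₃
          obtain ⟨ha1, ha2⟩ := haS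
          obtain ⟨hb1, hb2⟩ := hbS
          constructor
          · have e1 := mul_lt_mul_of_pos_left ha1 hl
            have e2 := mul_lt_mul_of_pos_left hb1 h1l
            linarith
          · have e1 := mul_le_mul_of_nonneg_left ha2 hl.le
            have e2 := mul_le_mul_of_nonneg_left hb2 h1l.le
            linarith
      have hconvC : ∀ a ∈ {a | t < g a} ∩ S₃, ∀ b ∈ {a | t < g a} ∩ S₃,
          ∀ μ ∈ Set.Icc (0:ℝ) 1, μ*a+(1-μ)*b ∈ {a | t < g a} ∩ S₃ := by
        rintro c₁ ⟨hc₁g, hc₁S⟩ c₂ ⟨hc₂g, hc₂S⟩ μ ⟨hμ0, hμ1⟩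
        have hμ1' : (0:ℝ) ≤ 1 - μ := by linarith
        constructor
        · show t < g (μ*c₁+(1-μ)*c₂)
          have hb1 : t ^ μ ≤ g c₁ ^ μ := Real.rpow_le_rpow ht.le (le_of_lt hc₁g) hμ0
          have hb2 : t ^ (1-μ) ≤ g c₂ ^ (1-μ) := Real.rpow_le_rpow ht.le (le_of_lt hc₂g) hμ1'
          have htt : t ^ μ * t ^ (1-μ) = t := rpow_self_comb ht μ
          rcases eq_or_lt_of_le hμ0 with hμz | hμpos
          · have hb2' : t ^ (1-μ) < g c₂ ^ (1-μ) :=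
              Real.rpow_lt_rpow ht.le hc₂g (by linarith [hμz])
            calc t = t ^ μ * t ^ (1-μ) := htt.symm
            _ < g c₁ ^ μ * g c₂ ^ (1-μ) := by
                have h0 : 0 < t ^ μ := Real.rpow_pos_of_pos ht μ
                have h0' : t ^ μ ≤ g c₁ ^ μ := hb1
                nlinarith [Real.rpow_pos_of_pos ht (1-μ)]
            _ ≤ g (μ*c₁+(1-μ)*c₂) := hglc c₁ c₂ μ ⟨hμ0, hμ1⟩
          · have hb1' : t ^ μ < g c₁ ^ μ := Real.rpow_lt_rpow ht.le hc₁g hμpos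
            calc t = t ^ μ * t ^ (1-μ) := htt.symm
            _ < g c₁ ^ μ * g c₂ ^ (1-μ) := by
                nlinarith [Real.rpow_pos_of_pos ht (1-μ), Real.rpow_pos_of_pos ht μ]
            _ ≤ g (μ*c₁+(1-μ)*c₂) := hglc c₁ c₂ μ ⟨hμ0, hμ1⟩
        · show μ*c₁+(1-μ)*c₂ ∈ S₃
          obtain ⟨hc1a, hc1b⟩ := hc₁S
          obtain ⟨hc2a, hc2b⟩ := hc₂S
          constructor
          · rcases eq_or_lt_of_le hμ0 with hμz | hμpos
            · rw [← hμz]; simpa using hc2a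
            · have e1 := mul_lt_mul_of_pos_left hc1a hμpos
              have e2 := mul_le_mul_of_nonneg_left hc2a.le hμ1'
              linarith
          · have e1 := mul_le_mul_of_nonneg_left hc1b hμ0
            have e2 := mul_le_mul_of_nonneg_left hc2b hμ1'
            linarith
      exact vol_comb hAne hBne
        ((bddAbove_Ioc).mono inter_subset_right) ((bddBelow_Ioc).mono inter_subset_right)
        ((bddAbove_Ioc).mono inter_subset_right) ((bddBelow_Ioc).mono inter_subset_right)
        ((bddAbove_Ioc).mono inter_subset_right) ((bddBelow_Ioc).mono inter_subset_right)
        hconvC hcomb hl hl1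
    · -- vanishing case
      have hAempty : {a | m₁/N * t < g a} ∩ S₁ = ∅ := by
        apply eq_empty_iff_forall_notMem.mpr
        rintro a ⟨hag, haS⟩
        have : g a ≤ m₁ := hglea a haS
        have hm : m₁ ≤ m₁/N * t := by
          rw [div_mul_eq_mul_div, le_div_iff₀ hNpos]
          exact mul_le_mul_of_nonneg_left htN hm₁pos.le
        exact absurd hag (not_lt.mpr (this.trans hm))
      have hBempty : {a | m₂/N * t < g a} ∩ S₂ = ∅ := by
        apply eq_empty_iff_forall_notMem.mpr
        rintro a ⟨hag, haS⟩
        have : g a ≤ m₂ := hgleb a haS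
        have hm : m₂ ≤ m₂/N * t := by
          rw [div_mul_eq_mul_div, le_div_iff₀ hNpos]
          exact mul_le_mul_of_nonneg_left htN hm₂pos.le
        exact absurd hag (not_lt.mpr (this.trans hm))
      simp only [hAv, hBv, hAempty, hBempty, measure_empty, mul_zero, add_zero, zero_le]
  -- integrate the level inequality
  have hAc : Measurable fun t => Av (m₁/N * t) := hAvm.comp (measurable_const_mul _)
  have hBc : Measurable fun t => Bv (m₂/N * t) := hBvm.comp (measurable_const_mul _)
  have hlayerA : ∫⁻ t in Set.Ioi (0:ℝ), Av t = ENNReal.ofReal I := hlayer y₁ x₁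
  have hlayerB : ∫⁻ t in Set.Ioi (0:ℝ), Bv t = ENNReal.ofReal J := hlayer y₂ x₂
  have hlayerC : ∫⁻ t in Set.Ioi (0:ℝ), Cv t = ENNReal.ofReal K :=
    hlayer (l*y₁+(1-l)*y₂) (l*x₁+(1-l)*x₂)
  have hscaleA : ∫⁻ t in Set.Ioi (0:ℝ), Av (m₁/N * t)
      = ENNReal.ofReal (N/m₁) * ENNReal.ofReal I := by
    rw [lint_scale Av hAvm (c := m₁/N) (div_pos hm₁pos hNpos), hlayerA,
      show (m₁/N)⁻¹ = N/m₁ by field_simp]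
  have hscaleB : ∫⁻ t in Set.Ioi (0:ℝ), Bv (m₂/N * t)
      = ENNReal.ofReal (N/m₂) * ENNReal.ofReal J := by
    rw [lint_scale Bv hBvm (c := m₂/N) (div_pos hm₂pos hNpos), hlayerB,
      show (m₂/N)⁻¹ = N/m₂ by field_simp]
  have hscaled : ENNReal.ofReal l * (ENNReal.ofReal (N/m₁) * ENNReal.ofReal I)
      + ENNReal.ofReal (1-l) * (ENNReal.ofReal (N/m₂) * ENNReal.ofReal J)
      ≤ ENNReal.ofReal K := by
    rw [← hscaleA, ← hscaleB, ← hlayerC,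
      ← lintegral_const_mul _ hAc, ← lintegral_const_mul _ hBc,
      ← lintegral_add_left (hAc.const_mul _)]
    exact setLIntegral_mono hCvm hlevel
  -- back to the reals
  have hreal : l * (N/m₁ * I) + (1-l) * (N/m₂ * J) ≤ K := by
    rw [← ENNReal.ofReal_le_ofReal_iff hK0]
    calc ENNReal.ofReal (l * (N/m₁ * I) + (1-l) * (N/m₂ * J))
        = ENNReal.ofReal l * (ENNReal.ofReal (N/m₁) * ENNReal.ofReal I)
          + ENNReal.ofReal (1-l) * (ENNReal.ofReal (N/m₂) * ENNReal.ofReal J) := by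
          rw [ENNReal.ofReal_add (by positivity) (by positivity),
            ENNReal.ofReal_mul hl.le, ENNReal.ofReal_mul h1l.le,
            ENNReal.ofReal_mul (by positivity), ENNReal.ofReal_mul (by positivity)]
      _ ≤ ENNReal.ofReal K := hscaled
  -- weighted AM-GM
  have hamgm : (N/m₁ * I) ^ l * (N/m₂ * J) ^ (1-l) ≤ l * (N/m₁ * I) + (1-l) * (N/m₂ * J) :=
    Real.geom_mean_le_arith_mean2_weighted hl.le h1l.le (by positivity) (by positivity)
      (by ring)
  have hfactor : (N/m₁ * I) ^ l * (N/m₂ * J) ^ (1-l) = I ^ l * J ^ (1-l) := by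
    rw [rpow_split (by positivity) (by positivity) hI0 hJ0,
      Real.div_rpow hNpos.le hm₁pos.le, Real.div_rpow hNpos.le hm₂pos.le,
      div_mul_div_comm, hNN, ← hN, div_self hNpos.ne', one_mul]
  linarith [hfactor ▸ hamgm]

/-- If `f` is a nonnegative integrable log-concave density and
`F x = ∫_{-∞}^x f`, then the increment `(x, y) ↦ F x - F y` is log-concave
on `{(x, y) : y < x}`. -/
theorem cdf_increment_log_concave (f : ℝ → ℝ)
    (hf0 : ∀ x, 0 ≤ f x) (hfi : MeasureTheory.Integrable f)
    (hlc : ∀ x y : ℝ, ∀ l ∈ Set.Icc (0 : ℝ) 1,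
      f x ^ l * f y ^ (1 - l) ≤ f (l * x + (1 - l) * y))
    (F : ℝ → ℝ) (hF : ∀ x, F x = ∫ t in Set.Iic x, f t) :
    ∀ x₁ y₁ x₂ y₂ : ℝ, y₁ < x₁ → y₂ < x₂ → ∀ l ∈ Set.Icc (0 : ℝ) 1,
      (F x₁ - F y₁) ^ l * (F x₂ - F y₂) ^ (1 - l) ≤
        F (l * x₁ + (1 - l) * x₂) - F (l * y₁ + (1 - l) * y₂) := by
  intro x₁ y₁ x₂ y₂ h1 h2 l hlmem
  obtain ⟨hl0, hl1⟩ := hlmem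
  rcases eq_or_lt_of_le hl0 with hlz | hlpos
  · rw [← hlz]; norm_num
  rcases eq_or_lt_of_le hl1 with hlo | hlstrict
  · rw [hlo]; norm_num
  have h1l : (0:ℝ) < 1 - l := by linarith
  have hFdiff : ∀ u v : ℝ, u ≤ v → F v - F u = ∫ t in Set.Ioc u v, f t := by
    intro u v huv
    rw [hF, hF, intervalIntegral.integral_Iic_sub_Iic hfi.integrableOn hfi.integrableOn,
      intervalIntegral.integral_of_le huv]
  have hcomb1 : l*y₁+(1-l)*y₂ ≤ l*x₁+(1-l)*x₂ := by
    have e1 := mul_lt_mul_of_pos_left h1 hlpos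
    have e2 := mul_lt_mul_of_pos_left h2 h1l
    linarith
  rw [hFdiff _ _ h1.le, hFdiff _ _ h2.le, hFdiff _ _ hcomb1]
  set g : ℕ → ℝ → ℝ := fun n x => min (f x) ((n:ℝ)+1) with hg
  have hg0 : ∀ n x, 0 ≤ g n x := fun n x => le_min (hf0 x) (by positivity)
  have hgm : ∀ n, AEMeasurable (g n) volume := fun n =>
    hfi.aemeasurable.min aemeasurable_const
  have hgsm : ∀ n, AEStronglyMeasurable (g n) volume := fun n =>
    aestronglyMeasurable_iff_aemeasurable.mpr (hgm n)
  have hgbd : ∀ n x, g n x ≤ (n:ℝ)+1 := fun n x => min_le_right _ _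
  have hgf : ∀ n x, g n x ≤ f x := fun n x => min_le_left _ _
  have hglc : ∀ n, ∀ x y : ℝ, ∀ l' ∈ Set.Icc (0:ℝ) 1,
      g n x ^ l' * g n y ^ (1-l') ≤ g n (l'*x+(1-l')*y) := by
    intro n x y l' ⟨ha, hb⟩
    have hb' : (0:ℝ) ≤ 1 - l' := by linarith
    refine le_min ?_ ?_
    · calc g n x ^ l' * g n y ^ (1-l')
          ≤ f x ^ l' * f y ^ (1-l') := by
            apply mul_le_mul (Real.rpow_le_rpow (hg0 n x) (hgf n x) ha)
              (Real.rpow_le_rpow (hg0 n y) (hgf n y) hb')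
              (Real.rpow_nonneg (hg0 n y) _) (Real.rpow_nonneg (hf0 x) _)
      _ ≤ f (l'*x+(1-l')*y) := hlc x y l' ⟨ha, hb⟩
    · calc g n x ^ l' * g n y ^ (1-l')
          ≤ ((n:ℝ)+1) ^ l' * ((n:ℝ)+1) ^ (1-l') := by
            apply mul_le_mul (Real.rpow_le_rpow (hg0 n x) (hgbd n x) ha)
              (Real.rpow_le_rpow (hg0 n y) (hgbd n y) hb')
              (Real.rpow_nonneg (hg0 n y) _) (Real.rpow_nonneg (by positivity) _)
      _ = (n:ℝ)+1 := rpow_self_comb (by positivity) l'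
  have hgint : ∀ n (u v : ℝ), IntegrableOn (g n) (Set.Ioc u v) := by
    intro n u v
    refine Integrable.mono hfi.integrableOn ((hgsm n).restrict) ?_
    filter_upwards with x
    rw [Real.norm_eq_abs, Real.norm_eq_abs, abs_of_nonneg (hg0 n x), abs_of_nonneg (hf0 x)]
    exact hgf n x
  have htend : ∀ u v : ℝ, Tendsto (fun n => ∫ t in Set.Ioc u v, g n t) atTop
      (nhds (∫ t in Set.Ioc u v, f t)) := by
    intro u v
    apply tendsto_integral_of_dominated_convergence f (fun n => (hgsm n).restrict)
      hfi.integrableOn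
    · intro n
      filter_upwards with x
      rw [Real.norm_eq_abs, abs_of_nonneg (hg0 n x)]
      exact hgf n x
    · filter_upwards with x
      have : ∀ᶠ n : ℕ in atTop, g n x = f x := by
        filter_upwards [eventually_ge_atTop ⌈f x⌉₊] with n hn
        have : f x ≤ (n:ℝ)+1 := by
          calc f x ≤ (⌈f x⌉₊ : ℝ) := Nat.le_ceil _
          _ ≤ (n:ℝ) := by exact_mod_cast hn
          _ ≤ (n:ℝ)+1 := by linarith
        exact min_eq_left this
      exact Tendsto.congr' (this.mono fun n h => h.symm) tendsto_const_nhds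
  have hcore : ∀ n, (∫ t in Set.Ioc y₁ x₁, g n t) ^ l * (∫ t in Set.Ioc y₂ x₂, g n t) ^ (1-l)
      ≤ ∫ t in Set.Ioc (l*y₁+(1-l)*y₂) (l*x₁+(1-l)*x₂), g n t := fun n =>
    core (hg0 n) (hgm n) (hgbd n) (hglc n) h1 h2 hlpos hlstrict
  have hKn : ∀ n, ∫ t in Set.Ioc (l*y₁+(1-l)*y₂) (l*x₁+(1-l)*x₂), g n t
      ≤ ∫ t in Set.Ioc (l*y₁+(1-l)*y₂) (l*x₁+(1-l)*x₂), f t := fun n =>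
    setIntegral_mono_on (hgint n _ _) hfi.integrableOn measurableSet_Ioc
      (fun x _ => hgf n x)
  have hlhs : Tendsto (fun n => (∫ t in Set.Ioc y₁ x₁, g n t) ^ l
      * (∫ t in Set.Ioc y₂ x₂, g n t) ^ (1-l)) atTop
      (nhds ((∫ t in Set.Ioc y₁ x₁, f t) ^ l * (∫ t in Set.Ioc y₂ x₂, f t) ^ (1-l))) := by
    apply Tendsto.mul
    · exact (Real.continuousAt_rpow_const _ l (Or.inr hlpos.le)).tendsto.comp (htend y₁ x₁)
    · exact (Real.continuousAt_rpow_const _ (1-l) (Or.inr h1l.le)).tendsto.comp (htend y₂ x₂)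
  exact le_of_tendsto' hlhs fun n => (hcore n).trans (hKn n)
end

section
/- Let h > 0 and let F : ℝ → ℝ satisfy 0 ≤ F(x) ≤ 1 for all x ∈ [0, h]. Then the following are equivalent: (i) F(x + b) - F(x) ≥ F(y + b) - F(y) for all real x, y, b with 0 ≤ x ≤ y, 0 ≤ b, and y + b ≤ h; (ii) F is concave on the interval [0, h]. -/
/-- Key lemma: increment condition plus boundedness gives the concavity inequality
for ordered points `a ≤ c`. -/
lemma increment_key (h : ℝ) (F : ℝ → ℝ)
    (hF : ∀ x ∈ Set.Icc (0 : ℝ) h, 0 ≤ F x ∧ F x ≤ 1)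
    (hinc : ∀ x y b : ℝ, 0 ≤ x → x ≤ y → 0 ≤ b → y + b ≤ h →
      F (y + b) - F y ≤ F (x + b) - F x)
    {a c : ℝ} (ha : a ∈ Set.Icc (0:ℝ) h) (hc : c ∈ Set.Icc (0:ℝ) h) (hac : a ≤ c)
    {p q : ℝ} (hp : 0 ≤ p) (hq : 0 ≤ q) (hpq : p + q = 1) :
    p * F a + q * F c ≤ F (p * a + q * c) := by
  obtain ⟨ha0, hah⟩ := ha
  obtain ⟨hc0, hch⟩ := hc
  -- midpoint concavity
  have mid : ∀ u v : ℝ, 0 ≤ u → u ≤ v → v ≤ h → F u + F v ≤ 2 * F ((u + v) / 2) := by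
    intro u v hu huv hv
    have key := hinc u ((u + v) / 2) ((v - u) / 2) hu (by linarith) (by linarith) (by linarith)
    have e1 : (u + v) / 2 + (v - u) / 2 = v := by ring
    have e2 : u + (v - u) / 2 = (u + v) / 2 := by ring
    rw [e1, e2] at key
    linarith
  rcases eq_or_lt_of_le hac with rfl | hlt
  · have e : p * a + q * a = a := by linear_combination a * hpq
    rw [e]
    exact le_of_eq (by linear_combination (F a) * hpq)
  set d : ℝ := c - a with hd
  have hdpos : 0 < d := by simp [hd]; linarith
  have hdne : d ≠ 0 := ne_of_gt hdpos
  set L : ℝ → ℝ := fun z => F a + (z - a) / d * (F c - F a) with hL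
  set m : ℝ := p * a + q * c with hm
  have hma : a ≤ m := by nlinarith
  have hmc : m ≤ c := by nlinarith
  have hLm : L m = p * F a + q * F c := by
    have : (m - a) / d = q := by
      rw [hm, hd]; field_simp; nlinarith
    rw [hL]; simp only []
    rw [this]; linear_combination (-(F a)) * hpq
  -- doubling step
  have step : ∀ z, a ≤ z → z ≤ c → ∃ w, a ≤ w ∧ w ≤ c ∧ 2 * (L z - F z) ≤ L w - F w := by
    intro z hz1 hz2
    rcases le_total z ((a + c) / 2) with hcase | hcase
    · refine ⟨2 * z - a, by linarith, by linarith, ?_⟩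
      have hmz := mid a (2 * z - a) ha0 (by linarith) (by linarith)
      have e : (a + (2 * z - a)) / 2 = z := by ring
      rw [e] at hmz
      have hLw : L (2 * z - a) = 2 * L z - F a := by
        rw [hL]; simp only []; field_simp; ring
      rw [hLw]
      have hLa : L a = F a := by rw [hL]; simp
      linarith
    · refine ⟨2 * z - c, by linarith, by linarith, ?_⟩
      have hmz := mid (2 * z - c) c (by linarith) (by linarith) hch
      have e : ((2 * z - c) + c) / 2 = z := by ring
      rw [e] at hmz
      have hLw : L (2 * z - c) = 2 * L z - F c := by
        rw [hL]; simp only []; field_simp; ring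
      rw [hLw]
      linarith
  -- iterate
  have iter : ∀ n : ℕ, ∃ z, a ≤ z ∧ z ≤ c ∧ 2 ^ n * (L m - F m) ≤ L z - F z := by
    intro n
    induction n with
    | zero => exact ⟨m, hma, hmc, by simp⟩
    | succ n ih =>
      obtain ⟨z, hz1, hz2, hz3⟩ := ih
      obtain ⟨w, hw1, hw2, hw3⟩ := step z hz1 hz2
      refine ⟨w, hw1, hw2, ?_⟩
      have h2 : (2:ℝ) ^ (n+1) * (L m - F m) = 2 * (2 ^ n * (L m - F m)) := by ring
      rw [h2]; linarith
  -- bound: L z - F z ≤ 1 on [a,c]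
  have hbound : ∀ z, a ≤ z → z ≤ c → L z - F z ≤ 1 := by
    intro z hz1 hz2
    have hFz : 0 ≤ F z := (hF z ⟨by linarith, by linarith⟩).1
    have hFa1 : F a ≤ 1 := (hF a ⟨ha0, hah⟩).2
    have hFc1 : F c ≤ 1 := (hF c ⟨hc0, hch⟩).2
    have hFa0 : 0 ≤ F a := (hF a ⟨ha0, hah⟩).1
    have hFc0 : 0 ≤ F c := (hF c ⟨hc0, hch⟩).1
    have hs0 : 0 ≤ (z - a) / d := div_nonneg (by linarith) hdpos.le
    have hs1 : (z - a) / d ≤ 1 := by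
      rw [div_le_one hdpos]; linarith
    have : L z ≤ 1 := by
      rw [hL]; simp only []
      nlinarith
    linarith
  -- conclude
  by_contra hcon
  push_neg at hcon
  rw [← hLm] at hcon
  set ε : ℝ := L m - F m with hε
  have hεpos : 0 < ε := by simp [hε]; linarith
  obtain ⟨n, hn⟩ := pow_unbounded_of_one_lt (1 / ε) (one_lt_two (α := ℝ))
  obtain ⟨z, hz1, hz2, hz3⟩ := iter n
  have h1 : 1 < 2 ^ n * ε := by
    rw [div_lt_iff₀ hεpos] at hn; linarith
  have := hbound z hz1 hz2
  linarith

/-- For `F` bounded between 0 and 1 on `[0, h]`, the increment condition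
`F (x + b) - F x ≥ F (y + b) - F y` for all `0 ≤ x ≤ y`, `0 ≤ b`, `y + b ≤ h`
holds if and only if `F` is concave on `[0, h]`. -/
theorem increment_condition_iff_concave (h : ℝ) (hh : 0 < h) (F : ℝ → ℝ)
    (hF : ∀ x ∈ Set.Icc (0 : ℝ) h, 0 ≤ F x ∧ F x ≤ 1) :
    (∀ x y b : ℝ, 0 ≤ x → x ≤ y → 0 ≤ b → y + b ≤ h →
      F (y + b) - F y ≤ F (x + b) - F x) ↔ ConcaveOn ℝ (Set.Icc 0 h) F := by
  constructor
  · intro hinc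
    refine ⟨convex_Icc 0 h, ?_⟩
    intro u hu v hv p q hp hq hpq
    simp only [smul_eq_mul]
    rcases le_total u v with huv | hvu
    · exact increment_key h F hF hinc hu hv huv hp hq hpq
    · have := increment_key h F hF hinc hv hu hvu hq hp (by linarith)
      calc p * F u + q * F v = q * F v + p * F u := by ring
        _ ≤ F (q * v + p * u) := this
        _ = F (p * u + q * v) := by ring_nf
  · intro hconc x y b hx hxy hb hyb
    set d : ℝ := y + b - x with hd
    have hd0 : 0 ≤ d := by simp [hd]; linarith
    rcases eq_or_lt_of_le hd0 with heq | hdpos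
    · have hy : y = x := by linarith [hb, hxy, heq.symm ▸ (rfl : d = d)]
      have hb0 : b = 0 := by simp [hd] at heq; linarith
      rw [hy, hb0]
    · have hdne : d ≠ 0 := ne_of_gt hdpos
      have hxmem : x ∈ Set.Icc (0:ℝ) h := ⟨hx, by linarith⟩
      have hybmem : y + b ∈ Set.Icc (0:ℝ) h := ⟨by linarith, hyb⟩
      have hbd : b ≤ d := by simp [hd]; linarith
      have h1 := hconc.2 hxmem hybmem (show (0:ℝ) ≤ b / d from div_nonneg hb hdpos.le)
        (show (0:ℝ) ≤ 1 - b / d by rw [sub_nonneg, div_le_one hdpos]; linarith)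
        (by ring)
      have h2 := hconc.2 hxmem hybmem
        (show (0:ℝ) ≤ 1 - b / d by rw [sub_nonneg, div_le_one hdpos]; linarith)
        (show (0:ℝ) ≤ b / d from div_nonneg hb hdpos.le)
        (by ring)
      simp only [smul_eq_mul] at h1 h2
      have e1 : b / d * x + (1 - b / d) * (y + b) = y := by field_simp; ring
      have e2 : (1 - b / d) * x + b / d * (y + b) = x + b := by field_simp; ring
      rw [e1] at h1
      rw [e2] at h2
      nlinarith [h1, h2]
end

section
/- Let h > 0 and let F : ℝ → ℝ satisfy 0 ≤ F(x) ≤ 1 for all x ∈ [0, h], and suppose F is NOT concave on [0, h]. Then there exist nonnegative weights b₁, b₂, b₃ with b₁ + b₂ + b₃ ≤ h such that the set function f(S) = F(∑_{i ∈ S} b_i) on subsets of {1, 2, 3} is not submodular: there exist S' ⊆ S ⊆ {1, 2, 3} and w ∈ {1, 2, 3} \ S with f(S ∪ {w}) - f(S) > f(S' ∪ {w}) - f(S'). -/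
set_option maxHeartbeats 1000000

lemma prefix_avg (e : ℕ → ℝ) (n k : ℕ) (hk : k ≤ n)
    (hmono : ∀ i j, i ≤ j → j < n → e j ≤ e i) :
    (k : ℝ) * ∑ i ∈ Finset.range n, e i ≤ (n : ℝ) * ∑ i ∈ Finset.range k, e i := by
  have hsplit : ∑ i ∈ Finset.range n, e i
      = ∑ i ∈ Finset.range k, e i + ∑ i ∈ Finset.Ico k n, e i := by
    rw [Finset.range_eq_Ico, ← Finset.sum_Ico_consecutive e (Nat.zero_le k) hk, Finset.range_eq_Ico]
  have key : (k : ℝ) * ∑ i ∈ Finset.Ico k n, e i ≤ ((n : ℝ) - k) * ∑ i ∈ Finset.range k, e i := by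
    have h1 : ∀ j ∈ Finset.range k, ∑ i ∈ Finset.Ico k n, e i ≤ ((n : ℝ) - k) * e j := by
      intro j hj
      rw [Finset.mem_range] at hj
      calc ∑ i ∈ Finset.Ico k n, e i ≤ ∑ _i ∈ Finset.Ico k n, e j := by
            apply Finset.sum_le_sum
            intro i hi
            rw [Finset.mem_Ico] at hi
            exact hmono j i (le_trans hj.le hi.1) hi.2
        _ = ((n : ℝ) - k) * e j := by
            rw [Finset.sum_const, Nat.card_Ico, nsmul_eq_mul, Nat.cast_sub hk]
    calc (k : ℝ) * ∑ i ∈ Finset.Ico k n, e i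
        = ∑ _j ∈ Finset.range k, ∑ i ∈ Finset.Ico k n, e i := by
          rw [Finset.sum_const, Finset.card_range, nsmul_eq_mul]
      _ ≤ ∑ j ∈ Finset.range k, ((n : ℝ) - k) * e j := Finset.sum_le_sum h1
      _ = ((n : ℝ) - k) * ∑ j ∈ Finset.range k, e j := by rw [Finset.mul_sum]
  rw [hsplit]
  nlinarith [key]

lemma lemA (h : ℝ) (F : ℝ → ℝ)
    (W : ∀ x y c : ℝ, 0 ≤ x → x ≤ y → 0 ≤ c → y + c ≤ h → F (y + c) - F y ≤ F (x + c) - F x)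
    (u d : ℝ) (hu : 0 ≤ u) (hd : 0 ≤ d) (n k : ℕ) (hk : k ≤ n)
    (hnd : u + n * d ≤ h) :
    ((n : ℝ) - k) * F u + k * F (u + n * d) ≤ n * F (u + k * d) := by
  set e : ℕ → ℝ := fun i => F (u + (i + 1) * d) - F (u + i * d) with he
  have htel : ∀ m : ℕ, ∑ i ∈ Finset.range m, e i = F (u + m * d) - F u := by
    intro m
    have h0 := Finset.sum_range_sub (fun i : ℕ => F (u + i * d)) m
    push_cast at h0
    simpa [he] using h0
  have hmono : ∀ i j, i ≤ j → j < n → e j ≤ e i := by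
    intro i j hij hjn
    have hx : (0:ℝ) ≤ u + i * d := by positivity
    have hxy : u + i * d ≤ u + j * d := by
      have : (i:ℝ) ≤ j := by exact_mod_cast hij
      nlinarith
    have hyc : (u + j * d) + d ≤ h := by
      have : (j:ℝ) + 1 ≤ n := by exact_mod_cast hjn
      nlinarith
    have := W (u + i * d) (u + j * d) d hx hxy hd hyc
    simp only [he]
    convert this using 3 <;> ring
  have := prefix_avg e n k hk hmono
  rw [htel n, htel k] at this
  have hkn : (k : ℝ) ≤ n := by exact_mod_cast hk
  nlinarith [this]

lemma lemB_left (h : ℝ) (F : ℝ → ℝ)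
    (hF : ∀ x ∈ Set.Icc (0 : ℝ) h, 0 ≤ F x ∧ F x ≤ 1)
    (W : ∀ x y c : ℝ, 0 ≤ x → x ≤ y → 0 ≤ c → y + c ≤ h → F (y + c) - F y ≤ F (x + c) - F x)
    (v δ : ℝ) (hδ : 0 ≤ δ) (m : ℕ) (hm : 1 ≤ m)
    (hlow : 0 ≤ v - m * δ) (hhigh : v + δ ≤ h) :
    (m : ℝ) * (F (v + δ) - F v) ≤ 1 := by
  have hv0 : 0 ≤ v := by
    have : (0:ℝ) ≤ (m : ℝ) * δ := by positivity
    linarith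
  have hvh : v ≤ h := by linarith
  have htel := Finset.sum_range_sub (fun j : ℕ => F (v - ((m : ℝ) - j) * δ)) m
  have hterm : ∀ j ∈ Finset.range m,
      F (v + δ) - F v ≤ F (v - ((m : ℝ) - (j+1 : ℕ)) * δ) - F (v - ((m : ℝ) - j) * δ) := by
    intro j hj
    rw [Finset.mem_range] at hj
    have hjm : (j : ℝ) ≤ m := by exact_mod_cast hj.le
    have hx0 : (0:ℝ) ≤ v - ((m : ℝ) - j) * δ := by nlinarith
    have hxy : v - ((m : ℝ) - j) * δ ≤ v := by nlinarith
    have := W (v - ((m : ℝ) - j) * δ) v δ hx0 hxy hδ hhigh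
    have heq : v - ((m : ℝ) - j) * δ + δ = v - ((m : ℝ) - (j+1 : ℕ)) * δ := by
      push_cast; ring
    rw [heq] at this
    exact this
  calc (m : ℝ) * (F (v + δ) - F v)
      = ∑ _j ∈ Finset.range m, (F (v + δ) - F v) := by
        rw [Finset.sum_const, Finset.card_range, nsmul_eq_mul]
    _ ≤ ∑ j ∈ Finset.range m, (F (v - ((m : ℝ) - (j+1 : ℕ)) * δ) - F (v - ((m : ℝ) - j) * δ)) :=
        Finset.sum_le_sum hterm
    _ = F (v - ((m : ℝ) - (m : ℕ)) * δ) - F (v - ((m : ℝ) - (0 : ℕ)) * δ) := htel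
    _ ≤ 1 := by
        have h1 : v - ((m : ℝ) - (m : ℕ)) * δ = v := by push_cast; ring
        have h2 : v - ((m : ℝ) - (0 : ℕ)) * δ = v - m * δ := by push_cast; ring
        rw [h1, h2]
        have hb1 := (hF v ⟨hv0, hvh⟩).2
        have hb2 := (hF (v - m * δ) ⟨hlow, by nlinarith⟩).1
        linarith

lemma lemB_right (h : ℝ) (F : ℝ → ℝ)
    (hF : ∀ x ∈ Set.Icc (0 : ℝ) h, 0 ≤ F x ∧ F x ≤ 1)
    (W : ∀ x y c : ℝ, 0 ≤ x → x ≤ y → 0 ≤ c → y + c ≤ h → F (y + c) - F y ≤ F (x + c) - F x)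
    (vk δ : ℝ) (hδ : 0 ≤ δ) (hvk : 0 ≤ vk) (m : ℕ) (hm : 1 ≤ m)
    (hhigh : vk + ((m : ℝ) + 1) * δ ≤ h) :
    (-1 : ℝ) ≤ (m : ℝ) * (F (vk + δ) - F vk) := by
  have hm1 : (1:ℝ) ≤ m := by exact_mod_cast hm
  have htel := Finset.sum_range_sub (fun j : ℕ => F (vk + ((j : ℝ) + 1) * δ)) m
  push_cast at htel
  have hterm : ∀ j ∈ Finset.range m,
      F (vk + ((j : ℝ) + 1 + 1) * δ) - F (vk + ((j : ℝ) + 1) * δ) ≤ F (vk + δ) - F vk := by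
    intro j hj
    rw [Finset.mem_range] at hj
    have hjm : (j : ℝ) + 1 ≤ m := by exact_mod_cast hj
    have hxy : vk ≤ vk + ((j : ℝ) + 1) * δ := by nlinarith
    have hyc : vk + ((j : ℝ) + 1) * δ + δ ≤ h := by nlinarith
    have := W vk (vk + ((j : ℝ) + 1) * δ) δ hvk hxy hδ hyc
    have heq : vk + ((j : ℝ) + 1) * δ + δ = vk + ((j : ℝ) + 1 + 1) * δ := by ring
    rwa [heq] at this
  have hsum := Finset.sum_le_sum hterm
  rw [htel, Finset.sum_const, Finset.card_range, nsmul_eq_mul] at hsum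
  have h01 : vk + ((0:ℝ) + 1) * δ = vk + δ := by ring
  rw [h01] at hsum
  have hb1 := (hF (vk + ((m : ℝ) + 1) * δ) ⟨by nlinarith, hhigh⟩).1
  have hb2 := (hF (vk + δ) ⟨by nlinarith, by nlinarith⟩).2
  linarith

lemma wright_key (h : ℝ) (F : ℝ → ℝ)
    (hF : ∀ x ∈ Set.Icc (0 : ℝ) h, 0 ≤ F x ∧ F x ≤ 1)
    (W : ∀ x y c : ℝ, 0 ≤ x → x ≤ y → 0 ≤ c → y + c ≤ h → F (y + c) - F y ≤ F (x + c) - F x)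
    (u w a b : ℝ) (hu : u ∈ Set.Icc (0:ℝ) h) (hw : w ∈ Set.Icc (0:ℝ) h) (huw : u < w)
    (ha : 0 < a) (hb : 0 < b) (hab : a + b = 1) :
    a * F u + b * F w ≤ F (a * u + b * w) := by
  obtain ⟨v, hv⟩ : ∃ v, v = a * u + b * w := ⟨_, rfl⟩
  rw [← hv]
  have hb1 : b < 1 := by linarith
  have haa : a = 1 - b := by linarith
  rw [haa] at hv ⊢
  have hvu : v - u = b * (w - u) := by rw [hv]; ring
  have hwv : w - v = (1 - b) * (w - u) := by rw [hv]; ring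
  have huv : u ≤ v := by nlinarith [mul_pos hb (sub_pos.mpr huw), hvu]
  have hvw : v ≤ w := by nlinarith [mul_pos (show (0:ℝ) < 1 - b by linarith) (sub_pos.mpr huw), hwv]
  have hv0 : (0:ℝ) ≤ v := le_trans hu.1 huv
  have hvh : v ≤ h := le_trans hvw hw.2
  have hFu := hF u hu
  have hFw := hF w hw
  refine le_of_forall_pos_le_add ?_
  intro ε hε
  obtain ⟨n, hn⟩ := exists_nat_gt (3 / ε + 2)
  have h3ε : (0:ℝ) < 3 / ε := by positivity
  have hn2 : (2:ℝ) < n := by linarith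
  have hn0R : (0:ℝ) < n := by linarith
  have hn0 : 0 < n := by exact_mod_cast hn0R
  have hεn : 3 < ε * ((n:ℝ) - 2) := by
    have h1 : 3 / ε < (n:ℝ) - 2 := by linarith
    calc (3:ℝ) = ε * (3 / ε) := by field_simp
      _ < ε * ((n:ℝ) - 2) := mul_lt_mul_of_pos_left h1 hε
  have hdiv : ∀ m : ℝ, 1 ≤ m → (n:ℝ) - 1 ≤ 2 * m → (n:ℝ) / m + 1 ≤ n * ε := by
    intro m h1 h2
    have hm0 : (0:ℝ) < m := by linarith
    have key : (n:ℝ) ≤ ((n:ℝ) * ε - 1) * m := by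
      nlinarith [mul_le_mul_of_nonneg_right hεn.le (le_of_lt hm0),
        mul_le_mul_of_nonneg_left h2 hε.le]
    have : (n:ℝ) / m ≤ (n:ℝ) * ε - 1 := (div_le_iff₀ hm0).mpr key
    linarith
  obtain ⟨d, hd⟩ : ∃ d, d = (w - u) / n := ⟨_, rfl⟩
  have hd0 : (0:ℝ) < d := hd ▸ div_pos (by linarith) hn0R
  have hnd : u + n * d = w := by rw [hd]; field_simp; ring
  have hndh : u + n * d ≤ h := by rw [hnd]; exact hw.2
  obtain ⟨k, hk⟩ : ∃ k, k = ⌊b * n⌋₊ := ⟨_, rfl⟩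
  have hk1 : (k:ℝ) ≤ b * n := hk ▸ Nat.floor_le (by positivity)
  have hk2 : b * n < (k:ℝ) + 1 := hk ▸ Nat.lt_floor_add_one _
  clear hk
  have hkltn : (k:ℝ) < n := lt_of_le_of_lt hk1 (by nlinarith [mul_pos (show (0:ℝ) < 1 - b by linarith) hn0R])
  have hkn : k + 1 ≤ n := by
    have : k < n := by exact_mod_cast hkltn
    omega
  have hknR : (k:ℝ) + 1 ≤ n := by exact_mod_cast hkn
  have hvund : v - u = b * n * d := by
    have hh : (n:ℝ) * d = w - u := by rw [hd]; field_simp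
    rw [hvu, ← hh]; ring
  by_cases hcase : n ≤ 2 * k + 1
  · -- left case : use vk1 = u + (k+1) d
    have hn3 : 3 ≤ n := by
      have : 2 < n := by exact_mod_cast hn2
      omega
    have hk1n : 1 ≤ k := by omega
    have hK0 : (0:ℝ) < k := by exact_mod_cast hk1n
    obtain ⟨δ', hδ'⟩ : ∃ x, x = (u + ((k:ℝ)+1) * d) - v := ⟨_, rfl⟩
    have hδ'0 : 0 ≤ δ' := by
      rw [hδ']
      nlinarith [mul_nonneg (show (0:ℝ) ≤ (k:ℝ) + 1 - b * n by linarith) hd0.le, hvund]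
    have hδ'd : δ' ≤ d := by
      rw [hδ']
      nlinarith [mul_nonneg (show (0:ℝ) ≤ b * n - k by linarith) hd0.le, hvund]
    have hlow : 0 ≤ v - (k:ℝ) * δ' := by
      have h1 : (k:ℝ) * δ' ≤ k * d := mul_le_mul_of_nonneg_left hδ'd (by positivity)
      nlinarith [hvund, mul_nonneg (show (0:ℝ) ≤ b * n - k by linarith) hd0.le, hu.1]
    have hhigh : v + δ' ≤ h := by
      rw [hδ']
      nlinarith [hndh, mul_nonneg (show (0:ℝ) ≤ (n:ℝ) - (k + 1) by linarith) hd0.le]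
    have e1 := lemB_left h F hF W v δ' hδ'0 k hk1n hlow hhigh
    have hvδ : v + δ' = u + ((k:ℝ)+1) * d := by rw [hδ']; ring
    rw [hvδ] at e1
    have e2 := lemA h F W u d hu.1 hd0.le n (k+1) hkn hndh
    rw [hnd] at e2
    push_cast at e2
    have e1b : F (u + ((k:ℝ)+1) * d) - F v ≤ 1 / (k:ℝ) := (le_div_iff₀ hK0).mpr (by linarith [e1])
    have e3 : (n:ℝ) / k + 1 ≤ n * ε := hdiv k (by exact_mod_cast hk1n) (by
      have : (n:ℝ) ≤ 2 * k + 1 := by exact_mod_cast hcase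
      linarith)
    have step1 : (n:ℝ) * ((1 - b) * F u + b * F w) ≤ n * F (u + ((k:ℝ)+1) * d) + 1 := by
      have hprod := mul_nonneg (show (0:ℝ) ≤ (k:ℝ) + 1 - n * b by linarith)
        (show (0:ℝ) ≤ 1 - (F u - F w) by linarith [hFu.2, hFw.1])
      nlinarith [e2, hprod, hk1]
    have step2 : (n:ℝ) * F (u + ((k:ℝ)+1) * d) ≤ n * F v + n * (1 / (k:ℝ)) :=
      by linarith [mul_le_mul_of_nonneg_left e1b hn0R.le]
    have hfin : (n:ℝ) * ((1 - b) * F u + b * F w) ≤ n * (F v + ε) := by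
      have hnk : (n:ℝ) * (1/(k:ℝ)) = n / k := by ring
      linarith [step1, step2, e3, hnk.le, hnk.ge]
    exact (mul_le_mul_iff_right₀ hn0R).mp hfin
  · -- right case : use vk = u + k d
    push_neg at hcase
    have hm : 1 ≤ n - k - 1 := by omega
    obtain ⟨m, hmdef⟩ : ∃ m, m = n - k - 1 := ⟨_, rfl⟩
    have hmR : (m:ℝ) = (n:ℝ) - k - 1 := by
      rw [hmdef]
      push_cast [Nat.cast_sub (show k ≤ n by omega), Nat.cast_sub (show 1 ≤ n - k by omega)]
      ring
    have hm1 : 1 ≤ m := by omega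
    have hM0 : (0:ℝ) < m := by exact_mod_cast hm1
    obtain ⟨δ, hδd⟩ : ∃ x, x = v - (u + (k:ℝ) * d) := ⟨_, rfl⟩
    have hδ0 : 0 ≤ δ := by
      rw [hδd]
      nlinarith [mul_nonneg (show (0:ℝ) ≤ b * n - k by linarith) hd0.le, hvund]
    have hδltd : δ < d := by
      rw [hδd]
      nlinarith [mul_pos (show (0:ℝ) < (k:ℝ) + 1 - b * n by linarith) hd0, hvund]
    have hvk0 : (0:ℝ) ≤ u + (k:ℝ) * d := add_nonneg hu.1 (by positivity)
    have hhigh : (u + (k:ℝ) * d) + ((m:ℝ) + 1) * δ ≤ h := by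
      rw [hmR]
      have h1 : ((n:ℝ) - k) * δ ≤ ((n:ℝ) - k) * d :=
        mul_le_mul_of_nonneg_left hδltd.le (by linarith)
      linarith [hndh, h1]
    have e1 := lemB_right h F hF W (u + (k:ℝ) * d) δ hδ0 hvk0 m hm1 hhigh
    have hvδ : (u + (k:ℝ) * d) + δ = v := by rw [hδd]; ring
    rw [hvδ] at e1
    have e2 := lemA h F W u d hu.1 hd0.le n k (by omega) hndh
    rw [hnd] at e2
    have e1b : F (u + (k:ℝ) * d) - F v ≤ 1 / (m:ℝ) := (le_div_iff₀ hM0).mpr (by linarith [e1])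
    have e3 : (n:ℝ) / m + 1 ≤ n * ε := hdiv m (by exact_mod_cast hm1) (by
      rw [hmR]
      have : (2:ℝ) * k + 2 ≤ n := by exact_mod_cast (show 2 * k + 2 ≤ n by omega)
      linarith)
    have step1 : (n:ℝ) * ((1 - b) * F u + b * F w) ≤ n * F (u + (k:ℝ) * d) + 1 := by
      have hprod := mul_nonneg (show (0:ℝ) ≤ n * b - k by linarith)
        (show (0:ℝ) ≤ 1 + (F u - F w) by linarith [hFu.1, hFw.2])
      nlinarith [e2, hprod, hk2]
    have step2 : (n:ℝ) * F (u + (k:ℝ) * d) ≤ n * F v + n * (1 / (m:ℝ)) :=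
      by linarith [mul_le_mul_of_nonneg_left e1b hn0R.le]
    have hfin : (n:ℝ) * ((1 - b) * F u + b * F w) ≤ n * (F v + ε) := by
      have hnm : (n:ℝ) * (1/(m:ℝ)) = n / m := by ring
      linarith [step1, step2, e3, hnm.le, hnm.ge]
    exact (mul_le_mul_iff_right₀ hn0R).mp hfin

lemma wright_concave (h : ℝ) (F : ℝ → ℝ)
    (hF : ∀ x ∈ Set.Icc (0 : ℝ) h, 0 ≤ F x ∧ F x ≤ 1)
    (W : ∀ x y c : ℝ, 0 ≤ x → x ≤ y → 0 ≤ c → y + c ≤ h → F (y + c) - F y ≤ F (x + c) - F x) :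
    ConcaveOn ℝ (Set.Icc 0 h) F := by
  constructor
  · exact convex_Icc 0 h
  intro x hx y hy a b ha hb hab
  simp only [smul_eq_mul]
  rcases eq_or_lt_of_le ha with ha0 | ha0
  · have hb1 : b = 1 := by linarith
    rw [← ha0, hb1]; norm_num
  rcases eq_or_lt_of_le hb with hb0 | hb0
  · have ha1 : a = 1 := by linarith
    rw [← hb0, ha1]; norm_num
  rcases lt_trichotomy x y with hxy | rfl | hxy
  · exact wright_key h F hF W x y a b hx hy hxy ha0 hb0 hab
  · have hx1 : a * x + b * x = x := by rw [← add_mul, hab, one_mul]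
    rw [hx1, ← add_mul, hab, one_mul]
  · have hkey := wright_key h F hF W y x b a hy hx hxy hb0 ha0 (by linarith)
    calc a * F x + b * F y = b * F y + a * F x := by ring
      _ ≤ F (b * y + a * x) := hkey
      _ = F (a * x + b * y) := by rw [add_comm]

/-- If `F` is bounded between 0 and 1 on `[0, h]` but not concave on `[0, h]`,
then there are nonnegative weights `b₁, b₂, b₃` summing to at most `h` such that
the set function `S ↦ F (∑_{i ∈ S} b i)` on subsets of `{1,2,3}` is not submodular. -/
theorem nonconcave_gives_nonsubmodular (h : ℝ) (hh : 0 < h) (F : ℝ → ℝ)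
    (hF : ∀ x ∈ Set.Icc (0 : ℝ) h, 0 ≤ F x ∧ F x ≤ 1)
    (hnc : ¬ ConcaveOn ℝ (Set.Icc 0 h) F) :
    ∃ b : Fin 3 → ℝ, (∀ i, 0 ≤ b i) ∧ (∑ i, b i) ≤ h ∧
      ∃ S' S : Finset (Fin 3), ∃ w : Fin 3, S' ⊆ S ∧ w ∉ S ∧
        F (∑ i ∈ insert w S', b i) - F (∑ i ∈ S', b i) <
          F (∑ i ∈ insert w S, b i) - F (∑ i ∈ S, b i) := by
  by_contra hcon
  push_neg at hcon
  apply hnc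
  apply wright_concave h F hF
  intro x y c hx hxy hc hych
  have hsum : ∑ i, (![x, y - x, c] : Fin 3 → ℝ) i ≤ h := by
    rw [Fin.sum_univ_three]
    simp only [Matrix.cons_val_zero, Matrix.cons_val_one, Matrix.head_cons,
      Matrix.cons_val_two, Matrix.tail_cons]
    linarith
  have := hcon ![x, y - x, c] (by
      intro i
      fin_cases i <;> simp [hx, hc] <;> linarith)
    hsum {0} {0, 1} 2 (by decide) (by decide)
  simp [Finset.sum_insert, Fin.isValue, Matrix.cons_val_zero, Matrix.cons_val_one] at this
  rw [show c + y = y + c from by ring, show c + x = x + c from by ring] at this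
  linarith
end

section
/- Let V be a finite set, k a natural number, and σ a real-valued function on subsets of V that is nonnegative (σ(S) ≥ 0 for all S ⊆ V), monotone (σ(S') ≤ σ(S) whenever S' ⊆ S), and submodular (σ(S ∪ {w}) - σ(S) ≤ σ(S' ∪ {w}) - σ(S') for all S' ⊆ S ⊆ V and w ∈ V \ S). Let S₀ = ∅ and for i = 1, …, k let S_i = S_{i-1} ∪ {v_i}, where v_i ∈ V satisfies σ(S_{i-1} ∪ {v_i}) ≥ σ(S_{i-1} ∪ {w}) for all w ∈ V. Then for every S* ⊆ V with |S*| ≤ k, σ(S_k) ≥ (1 - 1/e) · σ(S*). -/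
/-- Telescoping bound from submodularity. -/
lemma greedy_telescope {V : Type*} [DecidableEq V] (σ : Finset V → ℝ)
    (hsub : ∀ S' S : Finset V, S' ⊆ S → ∀ w ∉ S,
      σ (insert w S) - σ S ≤ σ (insert w S') - σ S')
    (A B : Finset V) :
    σ (A ∪ B) ≤ σ B + ∑ w ∈ A \ B, (σ (insert w B) - σ B) := by
  induction A using Finset.induction_on with
  | empty => simp
  | @insert a A' ha ih =>
    by_cases hb : a ∈ B
    · have h1 : insert a A' ∪ B = A' ∪ B := by
        rw [Finset.insert_union, Finset.insert_eq_self.mpr (Finset.mem_union_right _ hb)]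
      have h2 : insert a A' \ B = A' \ B := Finset.insert_sdiff_of_mem _ hb
      rw [h1, h2]; exact ih
    · have hnotU : a ∉ A' ∪ B := by simp [ha, hb]
      have hsub' := hsub B (A' ∪ B) Finset.subset_union_right a hnotU
      have h1 : insert a A' ∪ B = insert a (A' ∪ B) := Finset.insert_union _ _ _
      have h2 : insert a A' \ B = insert a (A' \ B) := Finset.insert_sdiff_of_notMem _ hb
      have h3 : a ∉ A' \ B := fun h => ha (Finset.mem_sdiff.mp h).1
      rw [h1, h2, Finset.sum_insert h3]
      linarith

/-- Greedy `(1 - 1/e)`-approximation guarantee for nonnegative monotone submodular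
set functions (Nemhauser–Wolsey–Fisher). -/
theorem greedy_approximation {V : Type*} [Fintype V] [DecidableEq V] (k : ℕ)
    (σ : Finset V → ℝ)
    (hnn : ∀ S, 0 ≤ σ S)
    (hmono : ∀ S' S : Finset V, S' ⊆ S → σ S' ≤ σ S)
    (hsub : ∀ S' S : Finset V, S' ⊆ S → ∀ w ∉ S,
      σ (insert w S) - σ S ≤ σ (insert w S') - σ S')
    (S : ℕ → Finset V) (v : ℕ → V)
    (hS0 : S 0 = ∅)
    (hstep : ∀ i, 1 ≤ i → i ≤ k → S i = insert (v i) (S (i - 1)))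
    (hgreedy : ∀ i, 1 ≤ i → i ≤ k → ∀ w : V,
      σ (insert w (S (i - 1))) ≤ σ (insert (v i) (S (i - 1)))) :
    ∀ Sstar : Finset V, Sstar.card ≤ k →
      (1 - 1 / Real.exp 1) * σ Sstar ≤ σ (S k) := by
  intro Sstar hcard
  have hepos : (0:ℝ) < Real.exp 1 := Real.exp_pos 1
  have heinv : (0:ℝ) ≤ 1 / Real.exp 1 := by positivity
  rcases Nat.eq_zero_or_pos k with hk0 | hk
  · subst hk0
    have h0 : Sstar = ∅ := Finset.card_eq_zero.mp (Nat.le_zero.mp hcard)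
    subst h0
    rw [hS0]
    nlinarith [hnn (∅ : Finset V)]
  · have hkR : (0:ℝ) < (k:ℝ) := by exact_mod_cast hk
    have hkR1 : (1:ℝ) ≤ (k:ℝ) := by exact_mod_cast hk
    have hbase : (0:ℝ) ≤ 1 - 1/(k:ℝ) := by
      have : 1/(k:ℝ) ≤ 1 := by rw [div_le_one hkR]; exact hkR1
      linarith
    -- per-step contraction
    have key : ∀ i, i < k →
        σ Sstar - σ (S (i+1)) ≤ (1 - 1/(k:ℝ)) * (σ Sstar - σ (S i)) := by
      intro i hi
      have h1 : 1 ≤ i + 1 := by omega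
      have h2 : i + 1 ≤ k := by omega
      have hstep' : S (i+1) = insert (v (i+1)) (S i) := by
        simpa using hstep (i+1) h1 h2
      have hgain : 0 ≤ σ (S (i+1)) - σ (S i) := by
        rw [hstep']
        have := hmono (S i) (insert (v (i+1)) (S i)) (Finset.subset_insert _ _)
        linarith
      have hbound : σ Sstar - σ (S i) ≤ (k:ℝ) * (σ (S (i+1)) - σ (S i)) := by
        have hm : σ Sstar ≤ σ (Sstar ∪ S i) := hmono _ _ Finset.subset_union_left
        have ht := greedy_telescope σ hsub Sstar (S i)
        have hsum : ∑ w ∈ Sstar \ S i, (σ (insert w (S i)) - σ (S i))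
            ≤ (Sstar \ S i).card • (σ (S (i+1)) - σ (S i)) := by
          apply Finset.sum_le_card_nsmul
          intro w _
          have hg := hgreedy (i+1) h1 h2 w
          simp only [Nat.add_sub_cancel] at hg
          rw [hstep']
          linarith
        have hcard' : ((Sstar \ S i).card : ℝ) ≤ (k:ℝ) := by
          have : (Sstar \ S i).card ≤ Sstar.card := Finset.card_le_card (Finset.sdiff_subset)
          exact_mod_cast le_trans this hcard
        have hsum' : ∑ w ∈ Sstar \ S i, (σ (insert w (S i)) - σ (S i))
            ≤ (k:ℝ) * (σ (S (i+1)) - σ (S i)) := by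
          rw [nsmul_eq_mul] at hsum
          calc _ ≤ ((Sstar \ S i).card : ℝ) * (σ (S (i+1)) - σ (S i)) := hsum
            _ ≤ (k:ℝ) * (σ (S (i+1)) - σ (S i)) := by
                exact mul_le_mul_of_nonneg_right hcard' hgain
        linarith
      have hdiv : (σ Sstar - σ (S i)) / (k:ℝ) ≤ σ (S (i+1)) - σ (S i) := by
        rw [div_le_iff₀ hkR]; linarith
      have hring : (1 - 1/(k:ℝ)) * (σ Sstar - σ (S i))
          = (σ Sstar - σ (S i)) - (σ Sstar - σ (S i)) / (k:ℝ) := by ring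
      rw [hring]; linarith
    -- iterate
    have hiter : ∀ i, i ≤ k →
        σ Sstar - σ (S i) ≤ (1 - 1/(k:ℝ))^i * (σ Sstar - σ (S 0)) := by
      intro i
      induction i with
      | zero => intro _; simp
      | succ n ih =>
        intro hn
        have h1 := key n (by omega)
        have h2 := ih (by omega)
        calc σ Sstar - σ (S (n+1)) ≤ (1 - 1/(k:ℝ)) * (σ Sstar - σ (S n)) := h1
          _ ≤ (1 - 1/(k:ℝ)) * ((1 - 1/(k:ℝ))^n * (σ Sstar - σ (S 0))) :=
              mul_le_mul_of_nonneg_left h2 hbase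
          _ = (1 - 1/(k:ℝ))^(n+1) * (σ Sstar - σ (S 0)) := by ring
    have hfin := hiter k le_rfl
    -- (1 - 1/k)^k ≤ 1/e
    have hexp : (1 - 1/(k:ℝ)) ≤ Real.exp (-(1/(k:ℝ))) := by
      have := Real.add_one_le_exp (-(1/(k:ℝ)))
      linarith
    have hpow : (1 - 1/(k:ℝ))^k ≤ Real.exp (-(1/(k:ℝ)))^k :=
      pow_le_pow_left₀ hbase hexp k
    have hpow2 : Real.exp (-(1/(k:ℝ)))^k = Real.exp (-1) := by
      rw [← Real.exp_nat_mul]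
      congr 1
      field_simp
    have hpow3 : (1 - 1/(k:ℝ))^k ≤ 1 / Real.exp 1 := by
      rw [hpow2, Real.exp_neg] at hpow
      simpa [one_div] using hpow
    have hd0 : 0 ≤ σ Sstar - σ (S 0) := by
      rw [hS0]
      have := hmono ∅ Sstar (Finset.empty_subset _)
      linarith
    have hd0' : σ Sstar - σ (S 0) ≤ σ Sstar := by
      have := hnn (S 0); linarith
    have h5 : (1 - 1/(k:ℝ))^k * (σ Sstar - σ (S 0)) ≤ (1 / Real.exp 1) * σ Sstar := by
      calc (1 - 1/(k:ℝ))^k * (σ Sstar - σ (S 0))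
          ≤ (1 / Real.exp 1) * (σ Sstar - σ (S 0)) :=
            mul_le_mul_of_nonneg_right hpow3 hd0
        _ ≤ (1 / Real.exp 1) * σ Sstar := mul_le_mul_of_nonneg_left hd0' heinv
    linarith
end

section
/- Let k, m be positive natural numbers, X a k × m real matrix, R the k × k lower-triangular matrix of ones (R_{ij} = 1 if j ≤ i and 0 otherwise), and Z = R·X. If c is a real number such that X·Xᵀ - c·I is positive semidefinite, then Z·Zᵀ - (c/4)·I is positive semidefinite. Equivalently, the smallest eigenvalue of X·Xᵀ is at most 4 times the smallest eigenvalue of Z·Zᵀ. -/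
open Matrix Finset

private lemma shift_sq_bound (k : ℕ) (Y : ℕ → ℝ) (hYk : Y k = 0) :
    ∑ n ∈ Finset.range k, (Y n - Y (n+1))^2 ≤ 4 * ∑ n ∈ Finset.range k, (Y n)^2 := by
  have e1 : ∑ n ∈ Finset.range (k+1), (Y n)^2
      = ∑ n ∈ Finset.range k, (Y (n+1))^2 + (Y 0)^2 := Finset.sum_range_succ' _ k
  have e2 : ∑ n ∈ Finset.range (k+1), (Y n)^2
      = ∑ n ∈ Finset.range k, (Y n)^2 + (Y k)^2 := Finset.sum_range_succ _ k
  have h2 : ∑ n ∈ Finset.range k, (Y (n+1))^2 ≤ ∑ n ∈ Finset.range k, (Y n)^2 := by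
    nlinarith [sq_nonneg (Y 0)]
  have h1 : ∑ n ∈ Finset.range k, (Y n - Y (n+1))^2
      ≤ ∑ n ∈ Finset.range k, (2*(Y n)^2 + 2*(Y (n+1))^2) :=
    Finset.sum_le_sum fun n _ => by nlinarith [sq_nonneg (Y n + Y (n+1))]
  rw [Finset.sum_add_distrib, ← Finset.mul_sum, ← Finset.mul_sum] at h1
  linarith

/-- If `Z = R X` where `R` is the lower-triangular matrix of ones (rows of `Z` are
cumulative row sums of `X`), and `X Xᵀ - c • I` is positive semidefinite, then
`Z Zᵀ - (c/4) • I` is positive semidefinite. -/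
theorem cumsum_gram_eigenvalue_bound (k m : ℕ) (hk : 0 < k) (hm : 0 < m)
    (X : Matrix (Fin k) (Fin m) ℝ) (c : ℝ)
    (R : Matrix (Fin k) (Fin k) ℝ)
    (hR : ∀ i j, R i j = if j ≤ i then 1 else 0)
    (Z : Matrix (Fin k) (Fin m) ℝ) (hZ : Z = R * X)
    (hX : (X * Xᵀ - c • 1).PosSemidef) :
    (Z * Zᵀ - (c / 4) • 1).PosSemidef := by
  subst hZ
  obtain ⟨hXh, hXq⟩ := Matrix.posSemidef_iff_dotProduct_mulVec.mp hX
  rw [Matrix.posSemidef_iff_dotProduct_mulVec]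
  constructor
  · -- Hermitian
    have h1 : ((R * X) * (R * X)ᵀ).IsHermitian := by
      have := Matrix.isHermitian_mul_conjTranspose_self (R * X)
      rwa [Matrix.conjTranspose_eq_transpose_of_trivial] at this
    have h2 : ((c/4 : ℝ) • (1 : Matrix (Fin k) (Fin k) ℝ)).IsHermitian := by
      unfold Matrix.IsHermitian
      simp
    exact h1.sub h2
  · intro x
    set y : Fin k → ℝ := Rᵀ *ᵥ x with hy
    have hy' : y = x ᵥ* R := by rw [hy, Matrix.mulVec_transpose]
    have key : x ⬝ᵥ ((R * X) * (R * X)ᵀ) *ᵥ x = y ⬝ᵥ (X * Xᵀ) *ᵥ y := by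
      rw [Matrix.transpose_mul,
        show (R * X) * (Xᵀ * Rᵀ) = R * ((X * Xᵀ) * Rᵀ) by
          simp [Matrix.mul_assoc],
        ← Matrix.mulVec_mulVec, Matrix.dotProduct_mulVec, ← hy',
        ← Matrix.mulVec_mulVec, ← hy]
    -- quadratic facts
    have hq1 : c * (y ⬝ᵥ y) ≤ y ⬝ᵥ (X * Xᵀ) *ᵥ y := by
      have := hXq y
      simp only [star_trivial, Matrix.sub_mulVec, dotProduct_sub,
        Matrix.smul_mulVec, Matrix.one_mulVec, dotProduct_smul, smul_eq_mul] at this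
      linarith
    have hq0 : 0 ≤ y ⬝ᵥ (X * Xᵀ) *ᵥ y := by
      rw [← Matrix.mulVec_mulVec, Matrix.dotProduct_mulVec,
        show y ᵥ* X = Xᵀ *ᵥ y from (Matrix.mulVec_transpose X y).symm]
      exact Finset.sum_nonneg fun i _ => mul_self_nonneg _
    have hxnn : 0 ≤ x ⬝ᵥ x := Finset.sum_nonneg fun i _ => mul_self_nonneg _
    -- the cumulative-sum vector inequality : x ⬝ᵥ x ≤ 4 * (y ⬝ᵥ y)
    set x' : ℕ → ℝ := fun n => if h : n < k then x ⟨n, h⟩ else 0 with hx'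
    set Y : ℕ → ℝ := fun n => ∑ j ∈ Finset.Ico n k, x' j with hY
    have hYk : Y k = 0 := by simp [hY]
    have hstep : ∀ n < k, x' n = Y n - Y (n+1) := by
      intro n hn
      simp only [hY]
      rw [Finset.sum_eq_sum_Ico_succ_bot hn]
      ring
    have hfilter : ∀ i : Fin k,
        Finset.filter (fun n => (i : ℕ) ≤ n) (Finset.range k) = Finset.Ico (i : ℕ) k := by
      intro i; ext n
      simp [Finset.mem_Ico, and_comm]
    have hyY : ∀ i : Fin k, y i = Y (i : ℕ) := by
      intro i
      have : y i = ∑ j : Fin k, (if (i : ℕ) ≤ (j : ℕ) then 1 else 0) * x' (j : ℕ) := by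
        simp only [hy, Matrix.mulVec, dotProduct, Matrix.transpose_apply, hR,
          Fin.le_def, hx']
        refine Finset.sum_congr rfl fun j _ => ?_
        rw [dif_pos j.isLt]
      rw [this, Fin.sum_univ_eq_sum_range (fun n => (if (i : ℕ) ≤ n then 1 else 0) * x' n)]
      simp only [ite_mul, one_mul, zero_mul]
      rw [← Finset.sum_filter, hfilter i, hY]
    have hxx : x ⬝ᵥ x = ∑ n ∈ Finset.range k, (x' n)^2 := by
      simp only [dotProduct, ← sq]
      calc ∑ j : Fin k, x j ^ 2 = ∑ j : Fin k, x' (j : ℕ) ^ 2 :=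
            Finset.sum_congr rfl fun j _ => by simp [hx', j.isLt]
        _ = ∑ n ∈ Finset.range k, x' n ^ 2 :=
            Fin.sum_univ_eq_sum_range (fun n => x' n ^ 2) k
    have hyy : y ⬝ᵥ y = ∑ n ∈ Finset.range k, (Y n)^2 := by
      simp only [dotProduct, ← sq]
      calc ∑ i : Fin k, y i ^ 2 = ∑ i : Fin k, Y (i : ℕ) ^ 2 :=
            Finset.sum_congr rfl fun i _ => by rw [hyY]
        _ = ∑ n ∈ Finset.range k, Y n ^ 2 :=
            Fin.sum_univ_eq_sum_range (fun n => Y n ^ 2) k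
    have hbound : x ⬝ᵥ x ≤ 4 * (y ⬝ᵥ y) := by
      rw [hxx, hyy]
      calc ∑ n ∈ Finset.range k, (x' n)^2
          = ∑ n ∈ Finset.range k, (Y n - Y (n+1))^2 :=
            Finset.sum_congr rfl fun n hn => by rw [hstep n (Finset.mem_range.mp hn)]
        _ ≤ 4 * ∑ n ∈ Finset.range k, (Y n)^2 := shift_sq_bound k Y hYk
    -- conclude
    simp only [star_trivial, Matrix.sub_mulVec, dotProduct_sub,
      Matrix.smul_mulVec, Matrix.one_mulVec, dotProduct_smul, smul_eq_mul, key]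
    rcases le_or_gt c 0 with hc | hc
    · have : c / 4 * (x ⬝ᵥ x) ≤ 0 :=
        mul_nonpos_of_nonpos_of_nonneg (by linarith) hxnn
      linarith
    · have hyynn : 0 ≤ y ⬝ᵥ y := Finset.sum_nonneg fun i _ => mul_self_nonneg _
      nlinarith
end

section
/- For every positive natural number k and every vector v ∈ ℝ^k, ∑_{i=1}^{k} (∑_{j=i}^{k} v_j)² ≥ (1/4) ∑_{j=1}^{k} v_j². -/
/-- The sum of squared tail sums of a vector is at least one quarter of the sum of
its squared entries. -/
theorem tail_sums_sq_ge_quarter (k : ℕ) (hk : 0 < k) (v : Fin k → ℝ) :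
    (1 / 4) * ∑ j, (v j) ^ 2 ≤ ∑ i, (∑ j ∈ Finset.Ici i, v j) ^ 2 := by
  classical
  set T : ℕ → ℝ := fun n => ∑ j ∈ Finset.univ.filter (fun j : Fin k => n ≤ j.val), v j with hT
  have hTk : T k = 0 := by
    rw [hT]
    apply Finset.sum_eq_zero
    intro j hj
    simp only [Finset.mem_filter] at hj
    exact absurd hj.2 (by omega)
  have hstep : ∀ n (hn : n < k), v ⟨n, hn⟩ = T n - T (n + 1) := by
    intro n hn
    have hins : Finset.univ.filter (fun j : Fin k => n ≤ j.val)
        = insert (⟨n, hn⟩ : Fin k) (Finset.univ.filter (fun j : Fin k => n + 1 ≤ j.val)) := by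
      ext j
      simp only [Finset.mem_filter, Finset.mem_insert, Finset.mem_univ, true_and]
      constructor
      · intro h
        rcases eq_or_lt_of_le h with h' | h'
        · left; exact (Fin.ext h'.symm)
        · right; omega
      · rintro (rfl | h)
        · simp
        · omega
    have hnot : (⟨n, hn⟩ : Fin k) ∉ Finset.univ.filter (fun j : Fin k => n + 1 ≤ j.val) := by
      simp
    simp only [hT]
    rw [hins, Finset.sum_insert hnot]
    ring
  have h1 : ∑ j, (v j) ^ 2 = ∑ n ∈ Finset.range k, (T n - T (n + 1)) ^ 2 := by
    rw [← Fin.sum_univ_eq_sum_range (fun n => (T n - T (n + 1)) ^ 2) k]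
    apply Finset.sum_congr rfl
    intro i _
    rw [← hstep i.val i.isLt]
  have h2 : ∑ i, (∑ j ∈ Finset.Ici i, v j) ^ 2 = ∑ n ∈ Finset.range k, (T n) ^ 2 := by
    rw [← Fin.sum_univ_eq_sum_range (fun n => (T n) ^ 2) k]
    apply Finset.sum_congr rfl
    intro i _
    congr 1
    rw [hT]
    apply Finset.sum_congr
    · ext j
      simp only [Finset.mem_Ici, Finset.mem_filter, Finset.mem_univ, true_and, Fin.le_def]
    · intros; rfl
  have hshift : ∑ n ∈ Finset.range k, (T (n + 1)) ^ 2 ≤ ∑ n ∈ Finset.range k, (T n) ^ 2 := by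
    have := Finset.sum_range_succ' (fun n => (T n) ^ 2) k
    have h3 := Finset.sum_range_succ (fun n => (T n) ^ 2) k
    have h0 : (0:ℝ) ≤ (T 0) ^ 2 := sq_nonneg _
    rw [hTk] at h3
    nlinarith [this, h3]
  have hbound : ∑ n ∈ Finset.range k, (T n - T (n + 1)) ^ 2
      ≤ ∑ n ∈ Finset.range k, (2 * (T n) ^ 2 + 2 * (T (n + 1)) ^ 2) := by
    apply Finset.sum_le_sum
    intro n _
    nlinarith [sq_nonneg (T n + T (n + 1))]
  rw [h1, h2]
  rw [Finset.sum_add_distrib, ← Finset.mul_sum, ← Finset.mul_sum] at hbound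
  linarith
end

section
/- Let V be a finite set, V_c ⊆ V a set of child nodes, and for each v ∈ V_c a parent set P(v) ⊆ V and a function F_v : ℝ → ℝ that is L-Lipschitz (|F_v(x) - F_v(y)| ≤ L|x - y| for all real x, y). For edge weights b(u, v) ∈ ℝ indexed by v ∈ V_c and u ∈ P(v), define the spread σ_b(S) = |S| + ∑_{v ∈ V_c \ S} F_v(∑_{u ∈ P(v) ∩ S} b(u, v)) for S ⊆ V. Let k be a natural number, let S* ⊆ V with |S*| ≤ k maximize σ_b over {S ⊆ V : |S| ≤ k}, and let Ŝ ⊆ V with |Ŝ| ≤ k maximize σ_{b̂} over {S ⊆ V : |S| ≤ k}. Then |σ_b(S*) - σ_b(Ŝ)| ≤ 2L · ∑_{v ∈ V_c} ∑_{u ∈ P(v)} |b(u, v) - b̂(u, v)|. -/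
/-- On a bipartite graph, with `S*` optimal for the true GLT spread `σ_b` and `Ŝ`
optimal for the estimated spread `σ_b̂` over seed sets of size at most `k`, the loss
in true spread is bounded by `2L` times the ℓ₁ estimation error of the weights. -/
theorem bipartite_im_error_bound {V : Type*} [Fintype V] [DecidableEq V]
    (Vc : Finset V) (P : V → Finset V) (L : ℝ) (F : V → ℝ → ℝ)
    (hF : ∀ v ∈ Vc, ∀ x y : ℝ, |F v x - F v y| ≤ L * |x - y|)
    (b bhat : V → V → ℝ)
    (σ : (V → V → ℝ) → Finset V → ℝ)
    (hσ : ∀ w S, σ w S =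
      (S.card : ℝ) + ∑ v ∈ Vc \ S, F v (∑ u ∈ P v ∩ S, w u v))
    (k : ℕ) (Sstar Shat : Finset V)
    (hstar_card : Sstar.card ≤ k)
    (hstar_max : ∀ S : Finset V, S.card ≤ k → σ b S ≤ σ b Sstar)
    (hhat_card : Shat.card ≤ k)
    (hhat_max : ∀ S : Finset V, S.card ≤ k → σ bhat S ≤ σ bhat Shat) :
    |σ b Sstar - σ b Shat| ≤
      2 * L * ∑ v ∈ Vc, ∑ u ∈ P v, |b u v - bhat u v| := by
  set ε : ℝ := ∑ v ∈ Vc, ∑ u ∈ P v, |b u v - bhat u v| with hε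
  rcases Finset.eq_empty_or_nonempty Vc with hVc | hVc
  · -- σ doesn't depend on weights
    have h1 : σ b Sstar = σ bhat Sstar := by simp [hσ, hVc]
    have h2 : σ b Shat = σ bhat Shat := by simp [hσ, hVc]
    have := hstar_max Shat hhat_card
    have := hhat_max Sstar hstar_card
    have : σ b Sstar = σ b Shat := by linarith
    simp [this, hε, hVc]
  · obtain ⟨v0, hv0⟩ := hVc
    have hL : 0 ≤ L := by
      have := hF v0 hv0 0 1
      have h0 : (0:ℝ) ≤ |F v0 0 - F v0 1| := abs_nonneg _
      simp at this
      linarith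
    have hεnn : 0 ≤ ε := by
      apply Finset.sum_nonneg; intro v _
      exact Finset.sum_nonneg fun u _ => abs_nonneg _
    have key : ∀ S : Finset V, |σ b S - σ bhat S| ≤ L * ε := by
      intro S
      rw [hσ, hσ]
      have h1 : ((S.card : ℝ) + ∑ v ∈ Vc \ S, F v (∑ u ∈ P v ∩ S, b u v)) -
          ((S.card : ℝ) + ∑ v ∈ Vc \ S, F v (∑ u ∈ P v ∩ S, bhat u v)) =
          ∑ v ∈ Vc \ S, (F v (∑ u ∈ P v ∩ S, b u v) - F v (∑ u ∈ P v ∩ S, bhat u v)) := by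
        rw [Finset.sum_sub_distrib]; ring
      rw [h1]
      calc |∑ v ∈ Vc \ S, (F v (∑ u ∈ P v ∩ S, b u v) - F v (∑ u ∈ P v ∩ S, bhat u v))|
          ≤ ∑ v ∈ Vc \ S, |F v (∑ u ∈ P v ∩ S, b u v) - F v (∑ u ∈ P v ∩ S, bhat u v)| :=
            Finset.abs_sum_le_sum_abs _ _
        _ ≤ ∑ v ∈ Vc \ S, L * ∑ u ∈ P v, |b u v - bhat u v| := by
            apply Finset.sum_le_sum
            intro v hv
            have hvVc : v ∈ Vc := (Finset.mem_sdiff.mp hv).1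
            calc |F v (∑ u ∈ P v ∩ S, b u v) - F v (∑ u ∈ P v ∩ S, bhat u v)|
                ≤ L * |∑ u ∈ P v ∩ S, b u v - ∑ u ∈ P v ∩ S, bhat u v| := hF v hvVc _ _
              _ ≤ L * ∑ u ∈ P v, |b u v - bhat u v| := by
                  apply mul_le_mul_of_nonneg_left _ hL
                  rw [← Finset.sum_sub_distrib]
                  calc |∑ u ∈ P v ∩ S, (b u v - bhat u v)|
                      ≤ ∑ u ∈ P v ∩ S, |b u v - bhat u v| := Finset.abs_sum_le_sum_abs _ _
                    _ ≤ ∑ u ∈ P v, |b u v - bhat u v| :=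
                        Finset.sum_le_sum_of_subset_of_nonneg
                          (Finset.inter_subset_left) (fun _ _ _ => abs_nonneg _)
        _ ≤ ∑ v ∈ Vc, L * ∑ u ∈ P v, |b u v - bhat u v| :=
            Finset.sum_le_sum_of_subset_of_nonneg (Finset.sdiff_subset)
              (fun v _ _ => mul_nonneg hL (Finset.sum_nonneg fun u _ => abs_nonneg _))
        _ = L * ε := by rw [hε, Finset.mul_sum]
    have k1 := key Sstar
    have k2 := key Shat
    have h1 := hstar_max Shat hhat_card
    have h2 := hhat_max Sstar hstar_card
    have hLe : 0 ≤ L * ε := mul_nonneg hL hεnn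
    obtain ⟨a1, a2⟩ := abs_le.mp k1
    obtain ⟨a3, a4⟩ := abs_le.mp k2
    have h2e : 2 * L * ε = L * ε + L * ε := by ring
    rw [abs_le]
    constructor <;> linarith
end

section
/- Let α, β be real numbers with α ≥ 1 and β ≥ 1, not both equal to 1, and define F(x) = ∫_{0}^{x} t^{α-1} (1-t)^{β-1} dt. Then the function (z₁, z₂) ↦ log(F(z₁) - F(z₂)) is strictly concave on the convex set {(z₁, z₂) ∈ ℝ² : 0 < z₂ < z₁ < 1}. -/
open MeasureTheory intervalIntegral Set Real Filter

namespace BetaLogAux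


noncomputable def fb (α β t : ℝ) : ℝ := t ^ (α - 1) * (1 - t) ^ (β - 1)
noncomputable def Fb (α β z : ℝ) : ℝ := ∫ t in (0:ℝ)..z, fb α β t
noncomputable def Lb (α β t : ℝ) : ℝ := (α - 1) / t - (β - 1) / (1 - t)

variable {α β : ℝ}

lemma cont_fb (hα : 1 ≤ α) (hβ : 1 ≤ β) : Continuous (fb α β) := by
  apply Continuous.mul
  · exact continuous_iff_continuousAt.2 fun x =>
      Real.continuousAt_rpow_const x _ (Or.inr (by linarith))
  · exact (continuous_iff_continuousAt.2 fun x =>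
      Real.continuousAt_rpow_const x _ (Or.inr (by linarith))).comp
      (continuous_const.sub continuous_id)

lemma fb_pos {t : ℝ} (h0 : 0 < t) (h1 : t < 1) : 0 < fb α β t :=
  mul_pos (Real.rpow_pos_of_pos h0 _) (Real.rpow_pos_of_pos (by linarith) _)

lemma hasDerivAt_Fb (hα : 1 ≤ α) (hβ : 1 ≤ β) (z : ℝ) :
    HasDerivAt (Fb α β) (fb α β z) z :=
  integral_hasDerivAt_right ((cont_fb hα hβ).intervalIntegrable _ _)
    ((cont_fb hα hβ).stronglyMeasurableAtFilter _ _) (cont_fb hα hβ).continuousAt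

lemma cont_Fb (hα : 1 ≤ α) (hβ : 1 ≤ β) : Continuous (Fb α β) :=
  continuous_iff_continuousAt.2 fun z => (hasDerivAt_Fb hα hβ z).continuousAt

lemma hasDerivAt_fb {t : ℝ} (h0 : 0 < t) (h1 : t < 1) :
    HasDerivAt (fb α β) (Lb α β t * fb α β t) t := by
  have h1t : 0 < 1 - t := by linarith
  have ha : HasDerivAt (fun x : ℝ => x ^ (α - 1)) ((α - 1) * t ^ (α - 1 - 1)) t :=
    Real.hasDerivAt_rpow_const (Or.inl h0.ne')
  have hb : HasDerivAt (fun x : ℝ => (1 - x) ^ (β - 1))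
      (-((β - 1) * (1 - t) ^ (β - 1 - 1))) t := by
    have h2 : HasDerivAt (fun x : ℝ => 1 - x) (-1) t := by
      simpa using (hasDerivAt_id t).const_sub 1
    simpa [mul_comm, Function.comp_def] using
      (Real.hasDerivAt_rpow_const (x := 1 - t) (p := β - 1) (Or.inl h1t.ne')).comp t h2
  have : HasDerivAt (fb α β) _ t := ha.mul hb
  convert this using 1
  have e1 : t ^ (α - 1) = t ^ (α - 1 - 1) * t := by
    rw [← Real.rpow_add_one h0.ne']; ring_nf
  have e2 : (1 - t) ^ (β - 1) = (1 - t) ^ (β - 1 - 1) * (1 - t) := by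
    rw [← Real.rpow_add_one h1t.ne']; ring_nf
  simp only [fb, Lb, e1, e2]
  field_simp
  ring



lemma Lb_key {s t : ℝ} (hs : 0 < s) (hst : s < t) (ht : t < 1) :
    Lb α β s - Lb α β t = (α - 1) * (t - s) / (s * t) + (β - 1) * (t - s) / ((1 - s) * (1 - t)) := by
  have h1 : s ≠ 0 := hs.ne'
  have h2 : t ≠ 0 := (hs.trans hst).ne'
  have h3 : (1 : ℝ) - s ≠ 0 := by intro h; nlinarith
  have h4 : (1 : ℝ) - t ≠ 0 := by intro h; nlinarith
  unfold Lb; field_simp; ring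

lemma Lb_lt (hα : 1 ≤ α) (hβ : 1 ≤ β) (hne : 1 < α ∨ 1 < β) {s t : ℝ}
    (hs : 0 < s) (hst : s < t) (ht : t < 1) : Lb α β t < Lb α β s := by
  have key := Lb_key (α := α) (β := β) hs hst ht
  have ht0 : 0 < t := by linarith
  have h1s : 0 < 1 - s := by linarith
  have h1t : 0 < 1 - t := by linarith
  have hts : 0 < t - s := by linarith
  rcases hne with h | h
  · have p1 : 0 < (α - 1) * (t - s) / (s * t) := div_pos (by nlinarith) (by positivity)
    have p2 : 0 ≤ (β - 1) * (t - s) / ((1 - s) * (1 - t)) := by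
      apply div_nonneg; nlinarith; positivity
    linarith
  · have p1 : 0 ≤ (α - 1) * (t - s) / (s * t) := by
      apply div_nonneg; nlinarith; positivity
    have p2 : 0 < (β - 1) * (t - s) / ((1 - s) * (1 - t)) := div_pos (by nlinarith) (by positivity)
    linarith

lemma Lb_le (hα : 1 ≤ α) (hβ : 1 ≤ β) {s t : ℝ}
    (hs : 0 < s) (hst : s ≤ t) (ht : t < 1) : Lb α β t ≤ Lb α β s := by
  rcases eq_or_lt_of_le hst with rfl | h
  · exact le_rfl
  have key := Lb_key (α := α) (β := β) hs h ht
  have ht0 : 0 < t := by linarith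
  have h1s : 0 < 1 - s := by linarith
  have h1t : 0 < 1 - t := by linarith
  have hts : 0 < t - s := by linarith
  have p1 : 0 ≤ (α - 1) * (t - s) / (s * t) := by
    apply div_nonneg; nlinarith; positivity
  have p2 : 0 ≤ (β - 1) * (t - s) / ((1 - s) * (1 - t)) := by
    apply div_nonneg; nlinarith; positivity
  linarith

lemma quad_neg {G f1 f2 L1 L2 d1 d2 : ℝ} (hG : 0 < G) (hf1 : 0 < f1) (hf2 : 0 < f2)
    (h1 : L1 * G < f1 - f2) (h2 : f1 - f2 < L2 * G) (hd : d1 ≠ 0 ∨ d2 ≠ 0) :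
    (d1 ^ 2 * (L1 * f1) - d2 ^ 2 * (L2 * f2)) * G - (d1 * f1 - d2 * f2) ^ 2 < 0 := by
  have t3 : 0 ≤ f1 * f2 * (d1 - d2) ^ 2 := by positivity
  have idt : (d1 ^ 2 * (L1 * f1) - d2 ^ 2 * (L2 * f2)) * G - (d1 * f1 - d2 * f2) ^ 2 =
      -(d1 ^ 2 * f1 * ((f1 - f2) - L1 * G)) - d2 ^ 2 * f2 * (L2 * G - (f1 - f2))
        - f1 * f2 * (d1 - d2) ^ 2 := by ring
  rcases hd with h | h
  · have hp : 0 < d1 ^ 2 := pow_two_pos_of_ne_zero h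
    have t1 : 0 < d1 ^ 2 * f1 * ((f1 - f2) - L1 * G) := by
      apply mul_pos (mul_pos hp hf1); linarith
    have t2 : 0 ≤ d2 ^ 2 * f2 * (L2 * G - (f1 - f2)) := by
      apply mul_nonneg (mul_nonneg (sq_nonneg _) hf2.le); linarith
    linarith
  · have hp : 0 < d2 ^ 2 := pow_two_pos_of_ne_zero h
    have t2 : 0 < d2 ^ 2 * f2 * (L2 * G - (f1 - f2)) := by
      apply mul_pos (mul_pos hp hf2); linarith
    have t1 : 0 ≤ d1 ^ 2 * f1 * ((f1 - f2) - L1 * G) := by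
      apply mul_nonneg (mul_nonneg (sq_nonneg _) hf1.le); linarith
    linarith



lemma Fb_sub_eq (hα : 1 ≤ α) (hβ : 1 ≤ β) (z1 z2 : ℝ) :
    Fb α β z1 - Fb α β z2 = ∫ t in z2..z1, fb α β t := by
  unfold Fb
  exact intervalIntegral.integral_interval_sub_left
    ((cont_fb hα hβ).intervalIntegrable _ _) ((cont_fb hα hβ).intervalIntegrable _ _)

lemma Fb_sub_pos (hα : 1 ≤ α) (hβ : 1 ≤ β) {z1 z2 : ℝ}
    (h2 : 0 < z2) (h12 : z2 < z1) (h1 : z1 < 1) : 0 < Fb α β z1 - Fb α β z2 := by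
  rw [Fb_sub_eq hα hβ]
  apply intervalIntegral_pos_of_pos_on ((cont_fb hα hβ).intervalIntegrable _ _) _ h12
  intro x hx
  exact fb_pos (h2.trans hx.1) (hx.2.trans h1)

lemma key_ineqs (hα : 1 ≤ α) (hβ : 1 ≤ β) (hne : 1 < α ∨ 1 < β) {z1 z2 : ℝ}
    (h2 : 0 < z2) (h12 : z2 < z1) (h1 : z1 < 1) :
    Lb α β z1 * (Fb α β z1 - Fb α β z2) < fb α β z1 - fb α β z2 ∧
      fb α β z1 - fb α β z2 < Lb α β z2 * (Fb α β z1 - Fb α β z2) := by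
  have hLcont : ContinuousOn (Lb α β) (Icc z2 z1) := by
    apply ContinuousOn.sub
    · exact continuousOn_const.div continuousOn_id fun x hx => by
        have : 0 < x := h2.trans_le hx.1; simpa using this.ne'
    · exact continuousOn_const.div (continuousOn_const.sub continuousOn_id)
        fun x hx => by have := hx.2; dsimp; intro h; linarith
  have hfcont : ContinuousOn (fb α β) (Icc z2 z1) := (cont_fb hα hβ).continuousOn
  have hLfcont : ContinuousOn (fun t => Lb α β t * fb α β t) (Icc z2 z1) :=
    hLcont.mul hfcont
  have huIcc : uIcc z2 z1 = Icc z2 z1 := uIcc_of_le h12.le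
  have hftc : (∫ t in z2..z1, Lb α β t * fb α β t) = fb α β z1 - fb α β z2 := by
    apply intervalIntegral.integral_eq_sub_of_hasDerivAt
    · intro t ht
      rw [huIcc] at ht
      exact hasDerivAt_fb (h2.trans_le ht.1) (lt_of_le_of_lt ht.2 h1)
    · exact (huIcc ▸ hLfcont).intervalIntegrable
  rw [Fb_sub_eq hα hβ]
  constructor
  · rw [← intervalIntegral.integral_const_mul, ← hftc]
    apply intervalIntegral.integral_lt_integral_of_continuousOn_of_le_of_exists_lt h12
      (continuousOn_const.mul hfcont) hLfcont
    · intro t ht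
      exact mul_le_mul_of_nonneg_right
        (Lb_le hα hβ (h2.trans ht.1) ht.2 h1)
        (fb_pos (h2.trans ht.1) (lt_of_le_of_lt ht.2 h1)).le
    · exact ⟨z2, ⟨le_refl _, h12.le⟩,
        mul_lt_mul_of_pos_right (Lb_lt hα hβ hne h2 h12 h1) (fb_pos h2 (h12.trans h1))⟩
  · rw [← intervalIntegral.integral_const_mul, ← hftc]
    apply intervalIntegral.integral_lt_integral_of_continuousOn_of_le_of_exists_lt h12
      hLfcont (continuousOn_const.mul hfcont)
    · intro t ht
      exact mul_le_mul_of_nonneg_right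
        (Lb_le hα hβ h2 ht.1.le (lt_of_le_of_lt ht.2 h1))
        (fb_pos (h2.trans ht.1) (lt_of_le_of_lt ht.2 h1)).le
    · exact ⟨z1, ⟨h12.le, le_refl _⟩,
        mul_lt_mul_of_pos_right (Lb_lt hα hβ hne h2 h12 h1) (fb_pos (h2.trans h12) h1)⟩

lemma convexD : Convex ℝ {p : ℝ × ℝ | 0 < p.2 ∧ p.2 < p.1 ∧ p.1 < 1} := by
  rintro p ⟨hp1, hp2, hp3⟩ q ⟨hq1, hq2, hq3⟩ a b ha hb hab
  simp only [Set.mem_setOf_eq, Prod.fst_add, Prod.snd_add, Prod.smul_fst, Prod.smul_snd,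
    smul_eq_mul]
  rcases ha.eq_or_lt with rfl | ha'
  · have hb1 : b = 1 := by linarith
    subst hb1
    refine ⟨by linarith, by linarith, by linarith⟩
  · refine ⟨?_, ?_, ?_⟩
    · nlinarith [mul_pos ha' hp1, mul_nonneg hb hq1.le]
    · nlinarith [mul_lt_mul_of_pos_left hp2 ha', mul_le_mul_of_nonneg_left hq2.le hb]
    · nlinarith [mul_lt_mul_of_pos_left hp3 ha', mul_le_mul_of_nonneg_left hq3.le hb]

end BetaLogAux

open BetaLogAux in
/-- For Beta parameters `α, β ≥ 1` not both equal to 1, with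
`F x = ∫_0^x t^{α-1}(1-t)^{β-1} dt`, the function `(z₁, z₂) ↦ log (F z₁ - F z₂)`
is strictly concave on `{(z₁, z₂) : 0 < z₂ < z₁ < 1}`. -/
theorem beta_log_increment_strictly_concave (α β : ℝ)
    (hα : 1 ≤ α) (hβ : 1 ≤ β) (hne : ¬ (α = 1 ∧ β = 1)) :
    StrictConcaveOn ℝ {p : ℝ × ℝ | 0 < p.2 ∧ p.2 < p.1 ∧ p.1 < 1}
      (fun p : ℝ × ℝ => Real.log
        ((∫ t in (0 : ℝ)..p.1, t ^ (α - 1) * (1 - t) ^ (β - 1)) -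
          ∫ t in (0 : ℝ)..p.2, t ^ (α - 1) * (1 - t) ^ (β - 1))) := by
  have hne' : 1 < α ∨ 1 < β := by
    rcases hα.lt_or_eq with h | h
    · exact Or.inl h
    rcases hβ.lt_or_eq with h' | h'
    · exact Or.inr h'
    · exact absurd ⟨h.symm, h'.symm⟩ hne
  show StrictConcaveOn ℝ _ fun p : ℝ × ℝ => Real.log (Fb α β p.1 - Fb α β p.2)
  refine ⟨convexD, ?_⟩
  rintro x hx y hy hxy a b ha hb hab
  set d1 : ℝ := y.1 - x.1 with hd1
  set d2 : ℝ := y.2 - x.2 with hd2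
  have hd : d1 ≠ 0 ∨ d2 ≠ 0 := by
    by_contra h
    push_neg at h
    apply hxy
    have e1 : x.1 = y.1 := by have := h.1; rw [hd1] at this; linarith [sub_eq_zero.1 this]
    have e2 : x.2 = y.2 := by have := h.2; rw [hd2] at this; linarith [sub_eq_zero.1 this]
    exact Prod.ext e1 e2
  set φ : ℝ → ℝ := fun t => Real.log (Fb α β (x.1 + t * d1) - Fb α β (x.2 + t * d2)) with hφ
  -- membership of segment
  have hzD : ∀ t ∈ Icc (0:ℝ) 1, 0 < x.2 + t * d2 ∧ x.2 + t * d2 < x.1 + t * d1 ∧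
      x.1 + t * d1 < 1 := by
    intro t ht
    have hmem : ((1 - t) • x + t • y) ∈
        {p : ℝ × ℝ | 0 < p.2 ∧ p.2 < p.1 ∧ p.1 < 1} :=
      convexD hx hy (by linarith [ht.2]) ht.1 (by ring)
    simp only [Set.mem_setOf_eq, Prod.fst_add, Prod.snd_add, Prod.smul_fst, Prod.smul_snd,
      smul_eq_mul] at hmem
    have e1 : x.1 + t * d1 = (1 - t) * x.1 + t * y.1 := by rw [hd1]; ring
    have e2 : x.2 + t * d2 = (1 - t) * x.2 + t * y.2 := by rw [hd2]; ring
    rw [e1, e2]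
    exact hmem
  have hGpos : ∀ t ∈ Icc (0:ℝ) 1, 0 < Fb α β (x.1 + t * d1) - Fb α β (x.2 + t * d2) := by
    intro t ht
    obtain ⟨h1, h2, h3⟩ := hzD t ht
    exact Fb_sub_pos hα hβ h1 h2 h3
  set ψ : ℝ → ℝ := fun s => (fb α β (x.1 + s * d1) * d1 - fb α β (x.2 + s * d2) * d2) /
      (Fb α β (x.1 + s * d1) - Fb α β (x.2 + s * d2)) with hψ
  have hz1' : ∀ s : ℝ, HasDerivAt (fun u => x.1 + u * d1) d1 s := fun s => by
    simpa using ((hasDerivAt_id s).mul_const d1).const_add x.1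
  have hz2' : ∀ s : ℝ, HasDerivAt (fun u => x.2 + u * d2) d2 s := fun s => by
    simpa using ((hasDerivAt_id s).mul_const d2).const_add x.2
  have hG' : ∀ s : ℝ, HasDerivAt (fun u => Fb α β (x.1 + u * d1) - Fb α β (x.2 + u * d2))
      (fb α β (x.1 + s * d1) * d1 - fb α β (x.2 + s * d2) * d2) s := fun s =>
    ((hasDerivAt_Fb hα hβ _).comp s (hz1' s)).sub ((hasDerivAt_Fb hα hβ _).comp s (hz2' s))
  have hφ' : ∀ s ∈ Icc (0:ℝ) 1, HasDerivAt φ (ψ s) s := fun s hs =>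
    (hG' s).log (hGpos s hs).ne'
  have hφcont : ContinuousOn φ (Icc 0 1) := fun s hs =>
    (hφ' s hs).continuousAt.continuousWithinAt
  have hderiv2 : ∀ t ∈ interior (Icc (0:ℝ) 1), deriv^[2] φ t < 0 := by
    intro t ht
    rw [interior_Icc] at ht
    have hIcc : t ∈ Icc (0:ℝ) 1 := Ioo_subset_Icc_self ht
    obtain ⟨hw0, hw, hw1⟩ := hzD t hIcc
    have hG := hGpos t hIcc
    have hev : deriv φ =ᶠ[nhds t] ψ := by
      filter_upwards [Ioo_mem_nhds ht.1 ht.2] with s hs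
      exact (hφ' s (Ioo_subset_Icc_self hs)).deriv
    have hN' : HasDerivAt (fun u => fb α β (x.1 + u * d1) * d1 - fb α β (x.2 + u * d2) * d2)
        ((Lb α β (x.1 + t * d1) * fb α β (x.1 + t * d1)) * d1 * d1 -
          (Lb α β (x.2 + t * d2) * fb α β (x.2 + t * d2)) * d2 * d2) t :=
      by have := (((((hasDerivAt_fb (α := α) (β := β) (hw0.trans hw) hw1).comp t (hz1' t)).mul_const d1)).sub
        ((((hasDerivAt_fb (α := α) (β := β) hw0 (hw.trans hw1)).comp t (hz2' t)).mul_const d2))); exact this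
    have hψ' : HasDerivAt ψ
        ((((Lb α β (x.1 + t * d1) * fb α β (x.1 + t * d1)) * d1 * d1 -
            (Lb α β (x.2 + t * d2) * fb α β (x.2 + t * d2)) * d2 * d2) *
            (Fb α β (x.1 + t * d1) - Fb α β (x.2 + t * d2)) -
          (fb α β (x.1 + t * d1) * d1 - fb α β (x.2 + t * d2) * d2) *
            (fb α β (x.1 + t * d1) * d1 - fb α β (x.2 + t * d2) * d2)) /
          ((Fb α β (x.1 + t * d1) - Fb α β (x.2 + t * d2)) ^ 2)) t :=
      hN'.div (hG' t) hG.ne'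
    have h2eq : deriv^[2] φ t = deriv (deriv φ) t := rfl
    rw [h2eq, hev.deriv_eq, hψ'.deriv]
    apply div_neg_of_neg_of_pos _ (by positivity)
    have key := key_ineqs hα hβ hne' hw0 hw hw1
    have hq := quad_neg hG (fb_pos (hw0.trans hw) hw1) (fb_pos hw0 (hw.trans hw1))
      key.1 key.2 hd
    nlinarith [hq]
  have hconc : StrictConcaveOn ℝ (Icc (0:ℝ) 1) φ :=
    strictConcaveOn_of_deriv2_neg (convex_Icc 0 1) hφcont hderiv2
  have hkey := hconc.2 (show (0:ℝ) ∈ Icc (0:ℝ) 1 by constructor <;> norm_num)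
    (show (1:ℝ) ∈ Icc (0:ℝ) 1 by constructor <;> norm_num) (by norm_num) ha hb hab
  simp only [smul_eq_mul, mul_zero, mul_one, zero_add] at hkey
  have ha' : a = 1 - b := by linarith
  subst ha'
  have e0 : φ 0 = Real.log (Fb α β x.1 - Fb α β x.2) := by simp [hφ]
  have e1 : φ 1 = Real.log (Fb α β y.1 - Fb α β y.2) := by
    simp only [hφ]
    have c1 : x.1 + 1 * d1 = y.1 := by rw [hd1]; ring
    have c2 : x.2 + 1 * d2 = y.2 := by rw [hd2]; ring
    rw [c1, c2]
  have eb : φ b = Real.log (Fb α β ((1 - b) • x + b • y).1 - Fb α β ((1 - b) • x + b • y).2) := by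
    simp only [hφ]
    have c1 : x.1 + b * d1 = ((1 - b) • x + b • y).1 := by
      simp only [Prod.fst_add, Prod.smul_fst, smul_eq_mul, hd1]; ring
    have c2 : x.2 + b * d2 = ((1 - b) • x + b • y).2 := by
      simp only [Prod.snd_add, Prod.smul_snd, smul_eq_mul, hd2]; ring
    rw [c1, c2]
  show (1 - b) • Real.log (Fb α β x.1 - Fb α β x.2) + b • Real.log (Fb α β y.1 - Fb α β y.2) <
    Real.log (Fb α β ((1 - b) • x + b • y).1 - Fb α β ((1 - b) • x + b • y).2)
  rw [smul_eq_mul, smul_eq_mul, ← e0, ← e1, ← eb]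
  exact hkey
end
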